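/- arXiv:1606.05568 — 6 statements merged into one kernel-verified Lean document; each statement's English description precedes it below -/
import Mathlib

section
/- Let D₁ = {z ∈ ℂ : |z - 0.5| < 0.5} and D₂ = {z ∈ ℂ : |z + 0.5| < 0.5}, and let A = H^∞(D₁ ∪ D₂) be the ring of bounded holomorphic functions on D₁ ∪ D₂. Let S(z) = exp(-(1+z)/(1-z)), for n ≥ 1 let fₙ ∈ A be defined by fₙ = S^{1/n} (the principal branch, i.e. exp(-(1/n)·(1+z)/(1-z))) on D₁ and fₙ = S on D₂, and let a ∈ A be defined by a = 0 on D₁ and a = 1 on D₂. Then the ideal I of A generated by {f₁, f₂, f₃, ...} is not finitely generated, while the ideal a·I = {a·g : g ∈ I} is finitely generated. -/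
open scoped Classical

/-- The first disk `D₁ = {z : |z - 0.5| < 0.5}`. -/
def diskD1 : Set ℂ := Metric.ball ((0.5 : ℂ)) 0.5

/-- The second disk `D₂ = {z : |z + 0.5| < 0.5}`. -/
def diskD2 : Set ℂ := Metric.ball ((-0.5 : ℂ)) 0.5

/-- The union `Ω = D₁ ∪ D₂`. -/
def twoDisks : Set ℂ := diskD1 ∪ diskD2

/-- Extension by `0` of a function on `Ω` to `ℂ`. -/
noncomputable def extendByZeroOm (f : ↥twoDisks → ℂ) : ℂ → ℂ :=
  fun z => if h : z ∈ twoDisks then f ⟨z, h⟩ else 0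

/-- `H^∞(D₁ ∪ D₂)`: the algebra of bounded holomorphic functions on
`D₁ ∪ D₂`, with pointwise operations. -/
noncomputable def HinfTwoDisks : Subalgebra ℂ (↥twoDisks → ℂ) where
  carrier := {f | (∃ C : ℝ, ∀ z, ‖f z‖ ≤ C) ∧
    DifferentiableOn ℂ (extendByZeroOm f) twoDisks}
  mul_mem' := by
    rintro f g ⟨⟨C, hC⟩, hf⟩ ⟨⟨D, hD⟩, hg⟩
    refine ⟨⟨max C 0 * max D 0, fun z => ?_⟩, (hf.mul hg).congr fun z hz => by
      simp [extendByZeroOm, dif_pos hz]⟩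
    calc ‖(f * g) z‖ = ‖f z‖ * ‖g z‖ := by
          simp
      _ ≤ max C 0 * max D 0 :=
          mul_le_mul ((hC z).trans (le_max_left _ _))
            ((hD z).trans (le_max_left _ _)) (norm_nonneg _)
            (le_max_right C 0)
  add_mem' := by
    rintro f g ⟨⟨C, hC⟩, hf⟩ ⟨⟨D, hD⟩, hg⟩
    refine ⟨⟨C + D, fun z => ?_⟩, (hf.add hg).congr fun z hz => by
      simp [extendByZeroOm, dif_pos hz]⟩
    calc ‖(f + g) z‖ ≤ ‖f z‖ + ‖g z‖ := by
          simpa using norm_add_le (f z) (g z)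
      _ ≤ C + D := add_le_add (hC z) (hD z)
  algebraMap_mem' := by
    intro c
    refine ⟨⟨‖c‖, fun z => le_of_eq rfl⟩,
      (differentiableOn_const c).congr fun z hz => by
        simp [extendByZeroOm, dif_pos hz]⟩

/-- The functions `fₙ`: `S^{1/n}` on `D₁` and `S` on `D₂`, where
`S(z) = exp(-(1+z)/(1-z))`. -/
noncomputable def fFun (k : ℕ) : ↥twoDisks → ℂ := fun z =>
  if (z : ℂ) ∈ diskD1 then
    Complex.exp (-(1 / (k : ℂ)) * ((1 + (z : ℂ)) / (1 - (z : ℂ))))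
  else Complex.exp (-((1 + (z : ℂ)) / (1 - (z : ℂ))))

/-- The function `a`: `0` on `D₁` and `1` on `D₂`. -/
noncomputable def aFun : ↥twoDisks → ℂ := fun z =>
  if (z : ℂ) ∈ diskD1 then 0 else 1
section Aux

lemma mem_diskD1_abs {z : ℂ} (hz : z ∈ diskD1) : ‖z‖ < 1 := by
  have h : ‖z - 0.5‖ < 0.5 := by
    simpa [diskD1, Metric.mem_ball, Complex.dist_eq] using hz
  calc ‖z‖ = ‖(z - 0.5) + 0.5‖ := by ring_nf
    _ ≤ ‖z - 0.5‖ + ‖(0.5 : ℂ)‖ := norm_add_le _ _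
    _ < 1 := by
        have : ‖(0.5 : ℂ)‖ = 0.5 := by
          rw [show (0.5 : ℂ) = ((0.5 : ℝ) : ℂ) by norm_num, Complex.norm_real, Real.norm_eq_abs]
          norm_num
        rw [this]; linarith

lemma mem_diskD2_abs {z : ℂ} (hz : z ∈ diskD2) : ‖z‖ < 1 := by
  have h : ‖z + 0.5‖ < 0.5 := by
    simpa [diskD2, Metric.mem_ball, Complex.dist_eq, sub_neg_eq_add] using hz
  calc ‖z‖ = ‖(z + 0.5) + (-0.5)‖ := by ring_nf
    _ ≤ ‖z + 0.5‖ + ‖((-0.5) : ℂ)‖ := norm_add_le _ _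
    _ < 1 := by
        have : ‖((-0.5) : ℂ)‖ = 0.5 := by
          rw [show ((-0.5) : ℂ) = (((-0.5) : ℝ) : ℂ) by norm_num, Complex.norm_real, Real.norm_eq_abs]
          norm_num
        rw [this]; linarith

lemma mem_twoDisks_abs {z : ℂ} (hz : z ∈ twoDisks) : ‖z‖ < 1 := by
  rcases hz with h | h
  · exact mem_diskD1_abs h
  · exact mem_diskD2_abs h

lemma one_sub_ne {z : ℂ} (hz : z ∈ twoDisks) : (1 : ℂ) - z ≠ 0 := by
  intro h
  have : z = 1 := by linear_combination -h
  rw [this] at hz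
  have := mem_twoDisks_abs hz
  simp at this

lemma wRe_nonneg {z : ℂ} (hz : z ∈ twoDisks) : 0 ≤ ((1 + z) / (1 - z)).re := by
  have habs : Complex.normSq z < 1 := by
    have := mem_twoDisks_abs hz
    have h2 : ‖z‖ * ‖z‖ < 1 := by nlinarith [norm_nonneg z]
    rwa [← Complex.sq_norm, sq]
  have hne : 0 < Complex.normSq (1 - z) :=
    Complex.normSq_pos.mpr (one_sub_ne hz)
  rw [Complex.div_re]
  have hnum : (1 + z).re * (1 - z).re + (1 + z).im * (1 - z).im = 1 - Complex.normSq z := by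
    simp [Complex.normSq_apply]; ring
  rw [← add_div]
  rw [hnum]
  exact div_nonneg (by linarith) hne.le

lemma disks_disjoint {z : ℂ} (h1 : z ∈ diskD1) (h2 : z ∈ diskD2) : False := by
  have ha : ‖z - 0.5‖ < 0.5 := by
    simpa [diskD1, Metric.mem_ball, Complex.dist_eq] using h1
  have hb : ‖z + 0.5‖ < 0.5 := by
    simpa [diskD2, Metric.mem_ball, Complex.dist_eq, sub_neg_eq_add] using h2
  have h1e : ((0.5 : ℂ) - z) + (z + 0.5) = 1 := by ring
  have hle := norm_add_le ((0.5 : ℂ) - z) (z + 0.5)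
  rw [h1e] at hle
  have hc : ‖(0.5:ℂ) - z‖ = ‖z - 0.5‖ := by
    rw [← norm_neg]; ring_nf
  rw [hc] at hle
  simp at hle
  linarith

end Aux
lemma abs_fFun_d1 (k : ℕ) (z : ↥twoDisks) (h1 : (z : ℂ) ∈ diskD1) :
    ‖fFun k z‖ =
      Real.exp (-(1 / (k:ℝ)) * ((1 + (z:ℂ)) / (1 - (z:ℂ))).re) := by
  rw [fFun, if_pos h1, Complex.norm_exp]
  congr 1
  rw [show (-(1 / (k : ℂ))) = ((-(1/(k:ℝ)) : ℝ) : ℂ) by push_cast; ring,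
    Complex.re_ofReal_mul]

lemma abs_fFun_d2 (k : ℕ) (z : ↥twoDisks) (h1 : (z : ℂ) ∉ diskD1) :
    ‖fFun k z‖ = Real.exp (-((1 + (z:ℂ)) / (1 - (z:ℂ))).re) := by
  rw [fFun, if_neg h1, Complex.norm_exp, Complex.neg_re]

lemma twoDisks_isOpen : IsOpen twoDisks :=
  (Metric.isOpen_ball).union Metric.isOpen_ball

lemma diffAt_expw (c : ℂ) {z : ℂ} (hz : (1:ℂ) - z ≠ 0) :
    DifferentiableAt ℂ (fun w => Complex.exp (c * ((1 + w) / (1 - w)))) z := by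
  apply DifferentiableAt.cexp
  apply DifferentiableAt.const_mul
  exact DifferentiableAt.div (differentiableAt_const _ |>.add differentiableAt_fun_id)
    (differentiableAt_const _ |>.sub differentiableAt_fun_id) hz

lemma fFun_mem (k : ℕ) : fFun k ∈ HinfTwoDisks := by
  constructor
  · refine ⟨1, fun z => ?_⟩
    by_cases h1 : (z : ℂ) ∈ diskD1
    · rw [abs_fFun_d1 k z h1]
      have := wRe_nonneg z.2
      have hk : (0:ℝ) ≤ 1 / (k:ℝ) := by positivity
      calc Real.exp (-(1 / (k:ℝ)) * ((1 + (z:ℂ)) / (1 - (z:ℂ))).re) ≤ Real.exp 0 :=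
            Real.exp_le_exp.mpr (by nlinarith)
        _ = 1 := Real.exp_zero
    · rw [abs_fFun_d2 k z h1]
      have := wRe_nonneg z.2
      calc Real.exp (-((1 + (z:ℂ)) / (1 - (z:ℂ))).re) ≤ Real.exp 0 :=
            Real.exp_le_exp.mpr (by linarith)
        _ = 1 := Real.exp_zero
  · intro z hz
    rcases hz with h1 | h2
    · have heq : extendByZeroOm (fFun k) =ᶠ[nhds z]
          (fun w => Complex.exp ((-(1 / (k:ℂ))) * ((1 + w) / (1 - w)))) := by
        filter_upwards [Metric.isOpen_ball.mem_nhds h1] with w hw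
        have hw2 : w ∈ twoDisks := Or.inl hw
        simp only [extendByZeroOm, dif_pos hw2, fFun, if_pos (show w ∈ diskD1 from hw)]
      exact (heq.differentiableAt_iff.mpr
        (diffAt_expw _ (one_sub_ne (Or.inl h1)))).differentiableWithinAt
    · have heq : extendByZeroOm (fFun k) =ᶠ[nhds z]
          (fun w => Complex.exp ((-1 : ℂ) * ((1 + w) / (1 - w)))) := by
        filter_upwards [Metric.isOpen_ball.mem_nhds h2] with w hw
        have hw2 : w ∈ twoDisks := Or.inr hw
        have hw1 : w ∉ diskD1 := fun hc => disks_disjoint hc hw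
        simp only [extendByZeroOm, dif_pos hw2, fFun, if_neg hw1, neg_one_mul]
      exact (heq.differentiableAt_iff.mpr
        (diffAt_expw _ (one_sub_ne (Or.inr h2)))).differentiableWithinAt

noncomputable def fElem (k : ℕ) : ↥HinfTwoDisks := ⟨fFun k, fFun_mem k⟩
/-- The decay predicate: `|g| ≤ C·exp(-Re(w)/K)` on `D₁`. -/
def Key (K : ℕ) (g : ↥HinfTwoDisks) : Prop :=
  ∃ C : ℝ, 0 ≤ C ∧ ∀ z : ↥twoDisks, (z : ℂ) ∈ diskD1 →
    ‖(g : ↥twoDisks → ℂ) z‖ ≤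
      C * Real.exp (-(1 / (K:ℝ)) * ((1 + (z:ℂ)) / (1 - (z:ℂ))).re)

lemma exp_mono_K {K K' : ℕ} (hK : 1 ≤ K) (hKK : K ≤ K') {r : ℝ} (hr : 0 ≤ r) :
    Real.exp (-(1 / (K:ℝ)) * r) ≤ Real.exp (-(1 / (K':ℝ)) * r) := by
  apply Real.exp_le_exp.mpr
  have h1 : (0:ℝ) < K := by exact_mod_cast hK
  have h2 : (0:ℝ) < K' := by exact_mod_cast lt_of_lt_of_le hK hKK
  have h3 : 1 / (K':ℝ) ≤ 1 / (K:ℝ) := by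
    apply one_div_le_one_div_of_le h1; exact_mod_cast hKK
  nlinarith

lemma key_mono {K K' : ℕ} (hK : 1 ≤ K) (hKK : K ≤ K') {g : ↥HinfTwoDisks}
    (h : Key K g) : Key K' g := by
  obtain ⟨C, hC0, hC⟩ := h
  exact ⟨C, hC0, fun z hz => (hC z hz).trans
    (mul_le_mul_of_nonneg_left (exp_mono_K hK hKK (wRe_nonneg z.2)) hC0)⟩

lemma key_zero (K : ℕ) : Key K 0 := by
  refine ⟨0, le_refl _, fun z hz => ?_⟩
  simp

lemma key_add {K : ℕ} {x y : ↥HinfTwoDisks} (hx : Key K x) (hy : Key K y) :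
    Key K (x + y) := by
  obtain ⟨C, hC0, hC⟩ := hx
  obtain ⟨D, hD0, hD⟩ := hy
  refine ⟨C + D, by linarith, fun z hz => ?_⟩
  have h1 : ‖((x + y : ↥HinfTwoDisks) : ↥twoDisks → ℂ) z‖ ≤
      ‖(x : ↥twoDisks → ℂ) z‖ + ‖(y : ↥twoDisks → ℂ) z‖ := by
    simpa using norm_add_le ((x : ↥twoDisks → ℂ) z) ((y : ↥twoDisks → ℂ) z)
  calc ‖((x + y : ↥HinfTwoDisks) : ↥twoDisks → ℂ) z‖ ≤ _ := h1
    _ ≤ C * Real.exp (-(1 / (K:ℝ)) * ((1 + (z:ℂ)) / (1 - (z:ℂ))).re) +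
        D * Real.exp (-(1 / (K:ℝ)) * ((1 + (z:ℂ)) / (1 - (z:ℂ))).re) :=
        add_le_add (hC z hz) (hD z hz)
    _ = (C + D) * Real.exp (-(1 / (K:ℝ)) * ((1 + (z:ℂ)) / (1 - (z:ℂ))).re) := by ring

lemma key_smul {K : ℕ} (c : ↥HinfTwoDisks) {x : ↥HinfTwoDisks} (hx : Key K x) :
    Key K (c * x) := by
  obtain ⟨C, hC0, hC⟩ := hx
  obtain ⟨⟨M, hM⟩, -⟩ := c.2
  refine ⟨max M 0 * C, mul_nonneg (le_max_right _ _) hC0, fun z hz => ?_⟩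
  have h1 : ‖((c * x : ↥HinfTwoDisks) : ↥twoDisks → ℂ) z‖ =
      ‖(c : ↥twoDisks → ℂ) z‖ * ‖(x : ↥twoDisks → ℂ) z‖ := by
    have : ((c * x : ↥HinfTwoDisks) : ↥twoDisks → ℂ) z =
        (c : ↥twoDisks → ℂ) z * (x : ↥twoDisks → ℂ) z := rfl
    rw [this, norm_mul]
  rw [h1, mul_assoc]
  exact mul_le_mul ((hM z).trans (le_max_left _ _))
    (hC z hz) (norm_nonneg _) (le_max_right _ _)

lemma key_fElem {k K : ℕ} (hk : 1 ≤ k) (hkK : k ≤ K) : Key K (fElem k) := by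
  refine ⟨1, zero_le_one, fun z hz => ?_⟩
  rw [one_mul]
  show ‖fFun k z‖ ≤ _
  rw [abs_fFun_d1 k z hz]
  exact exp_mono_K hk hkK (wRe_nonneg z.2)
set_option synthInstance.maxHeartbeats 1000000 in
lemma key_of_mem_spanF (g : ↥HinfTwoDisks)
    (hg : g ∈ Ideal.span {g : ↥HinfTwoDisks | ∃ k : ℕ, 1 ≤ k ∧
      (g : ↥twoDisks → ℂ) = fFun k}) : ∃ K, 1 ≤ K ∧ Key K g := by
  refine Submodule.span_induction ?_ ?_ ?_ ?_ hg
  · rintro x ⟨k, hk, hx⟩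
    have hxe : x = fElem k := Subtype.ext hx
    exact ⟨k, hk, by rw [hxe]; exact key_fElem hk le_rfl⟩
  · exact ⟨1, le_rfl, key_zero 1⟩
  · rintro x y - - ⟨K1, hK1, h1⟩ ⟨K2, hK2, h2⟩
    exact ⟨max K1 K2, le_trans hK1 (le_max_left _ _),
      key_add (key_mono hK1 (le_max_left _ _) h1)
        (key_mono hK2 (le_max_right _ _) h2)⟩
  · rintro c x - ⟨K, hK, h⟩
    exact ⟨K, hK, by rw [smul_eq_mul]; exact key_smul c h⟩

lemma finset_key (T : Finset ↥HinfTwoDisks)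
    (h : ∀ t ∈ T, ∃ K, 1 ≤ K ∧ Key K t) :
    ∃ K, 1 ≤ K ∧ ∀ t ∈ T, Key K t := by
  classical
  induction T using Finset.induction_on with
  | empty => exact ⟨1, le_rfl, by simp⟩
  | @insert x s hxs ih =>
    obtain ⟨K1, hK1, h1⟩ := ih (fun t ht => h t (Finset.mem_insert_of_mem ht))
    obtain ⟨K2, hK2, h2⟩ := h _ (Finset.mem_insert_self _ _)
    refine ⟨max K1 K2, le_trans hK1 (le_max_left _ _), fun t ht => ?_⟩
    rcases Finset.mem_insert.mp ht with rfl | ht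
    · exact key_mono hK2 (le_max_right _ _) h2
    · exact key_mono hK1 (le_max_left _ _) (h1 t ht)

set_option synthInstance.maxHeartbeats 1000000 in
lemma key_span (K : ℕ) (T : Set ↥HinfTwoDisks) (hT : ∀ t ∈ T, Key K t)
    (g : ↥HinfTwoDisks) (hg : g ∈ Ideal.span T) : Key K g := by
  refine Submodule.span_induction ?_ ?_ ?_ ?_ hg
  · exact hT
  · exact key_zero K
  · exact fun x y _ _ hx hy => key_add hx hy
  · exact fun c x _ hx => by rw [smul_eq_mul]; exact key_smul c hx

lemma key_fail (K : ℕ) (hK : 1 ≤ K) : ¬ Key K (fElem (K + 1)) := by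
  rintro ⟨C, hC0, hC⟩
  have hKR : (1:ℝ) ≤ (K:ℝ) := by exact_mod_cast hK
  set δ : ℝ := 1 / (K:ℝ) - 1 / ((K:ℝ) + 1) with hδdef
  have hδ : 0 < δ := by
    rw [hδdef]
    have : 1 / ((K:ℝ) + 1) < 1 / (K:ℝ) := by
      apply one_div_lt_one_div_of_lt <;> linarith
    linarith
  set r₀ : ℝ := max 2 (Real.log (C + 1) / δ + 1) with hr₀def
  have hr₀2 : (2:ℝ) ≤ r₀ := le_max_left _ _
  have hr₀log : Real.log (C + 1) / δ + 1 ≤ r₀ := le_max_right _ _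
  set x : ℝ := 1 - 1 / r₀ with hxdef
  clear_value x r₀ δ
  have hr₀pos : (0:ℝ) < r₀ := by linarith
  have hinv : 0 < 1 / r₀ := by positivity
  have hinv2 : 1 / r₀ ≤ 1 / 2 := by
    apply one_div_le_one_div_of_le <;> linarith
  have hx1 : x < 1 := by rw [hxdef]; linarith
  have hxhalf : (1:ℝ)/2 ≤ x := by rw [hxdef]; linarith
  -- x ∈ D₁
  have hz1 : ((x:ℝ) : ℂ) ∈ diskD1 := by
    rw [diskD1, Metric.mem_ball, Complex.dist_eq]
    rw [show ((x:ℝ):ℂ) - 0.5 = (((x - 0.5 : ℝ)):ℂ) by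
        rw [Complex.ofReal_sub]; norm_num,
      Complex.norm_real, Real.norm_eq_abs]
    rw [abs_of_nonneg (by norm_num; linarith)]
    norm_num; linarith
  have hzt : ((x:ℝ) : ℂ) ∈ twoDisks := Or.inl hz1
  set zz : ↥twoDisks := ⟨((x:ℝ):ℂ), hzt⟩ with hzz
  -- the real part
  set r : ℝ := (1 + x) / (1 - x) with hrdef
  clear_value r
  have hre : ((1 + ((zz:ℂ))) / (1 - ((zz:ℂ)))).re = r := by
    have : (1 + ((zz:ℂ))) / (1 - ((zz:ℂ))) = ((r : ℝ) : ℂ) := by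
      rw [hzz, hrdef]
      push_cast
      rfl
    rw [this, Complex.ofReal_re]
  have h1x : (1:ℝ) - x = 1 / r₀ := by rw [hxdef]; ring
  have hr_eq : r = 2 * r₀ - 1 := by
    rw [hrdef, h1x, div_div_eq_mul_div, div_eq_iff (by positivity)]
    field_simp [hxdef]
    rw [hxdef, add_mul, sub_mul, one_div_mul_cancel hr₀pos.ne']; ring
  have hr_ge : r₀ ≤ r := by rw [hr_eq]; linarith
  have hrpos : 0 < r := by linarith
  -- evaluate the bound at zz
  have hb := hC zz hz1
  rw [show ((fElem (K+1) : ↥HinfTwoDisks) : ↥twoDisks → ℂ) = fFun (K+1) from rfl,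
    abs_fFun_d1 (K+1) zz hz1, hre] at hb
  rw [show ((K+1 : ℕ) : ℝ) = (K:ℝ) + 1 by push_cast; ring] at hb
  -- derive exp (δ * r) ≤ C
  have hEpos : 0 < Real.exp (-(1 / (K:ℝ)) * r) := Real.exp_pos _
  have hsplit : Real.exp (-(1 / ((K:ℝ) + 1)) * r) =
      Real.exp (δ * r) * Real.exp (-(1 / (K:ℝ)) * r) := by
    rw [← Real.exp_add]
    congr 1
    rw [hδdef]; ring
  rw [hsplit] at hb
  have hexpC : Real.exp (δ * r) ≤ C := le_of_mul_le_mul_right hb hEpos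
  -- but exp (δ * r) > C
  have hlog : Real.log (C + 1) < δ * r := by
    have h1 : Real.log (C + 1) / δ < r₀ := by linarith
    have h2 : Real.log (C + 1) < δ * r₀ := by
      rw [div_lt_iff₀ hδ] at h1; linarith
    nlinarith
  have : C + 1 < Real.exp (δ * r) := by
    calc C + 1 = Real.exp (Real.log (C + 1)) := (Real.exp_log (by linarith)).symm
      _ < Real.exp (δ * r) := Real.exp_lt_exp.mpr hlog
  linarith
set_option synthInstance.maxHeartbeats 1000000 in
lemma aMul_eq (a : ↥HinfTwoDisks) (ha : (a : ↥twoDisks → ℂ) = aFun) (k : ℕ) :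
    a * fElem k = a * fElem 1 := by
  apply Subtype.ext
  funext z
  show (a : ↥twoDisks → ℂ) z * fFun k z = (a : ↥twoDisks → ℂ) z * fFun 1 z
  rw [ha]
  by_cases h1 : (z : ℂ) ∈ diskD1
  · simp [aFun, if_pos h1]
  · rw [fFun, fFun, if_neg h1, if_neg h1]

set_option maxHeartbeats 1000000 in
set_option synthInstance.maxHeartbeats 1000000 in
lemma mul_mem_span_aMul (a : ↥HinfTwoDisks) (ha : (a : ↥twoDisks → ℂ) = aFun)
    (g : ↥HinfTwoDisks)
    (hg : g ∈ Ideal.span {g : ↥HinfTwoDisks | ∃ k : ℕ, 1 ≤ k ∧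
      (g : ↥twoDisks → ℂ) = fFun k}) :
    a * g ∈ Ideal.span {a * fElem 1} := by
  refine Submodule.span_induction ?_ ?_ ?_ ?_ hg
  · rintro y ⟨k, hk, hy⟩
    have hye : y = fElem k := Subtype.ext hy
    rw [hye, aMul_eq a ha k]
    exact Ideal.subset_span rfl
  · rw [mul_zero]; exact Ideal.zero_mem _
  · intro u v _ _ hu hv
    rw [mul_add]; exact Ideal.add_mem _ hu hv
  · intro c u _ hu
    rw [smul_eq_mul, show a * (c * u) = c * (a * u) by ring]
    exact Ideal.mul_mem_left _ _ hu

set_option maxHeartbeats 1000000 in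
set_option synthInstance.maxHeartbeats 1000000 in
/-- In `A = H^∞(D₁ ∪ D₂)`, the ideal `I` generated by the functions `f₁, f₂, …`
is not finitely generated, while the ideal `a·I` is finitely generated. -/
theorem noncoherent_stmt2 (a : ↥HinfTwoDisks) (ha : (a : ↥twoDisks → ℂ) = aFun)
    (I J : Ideal ↥HinfTwoDisks)
    (hI : I = Ideal.span {g : ↥HinfTwoDisks | ∃ k : ℕ, 1 ≤ k ∧
      (g : ↥twoDisks → ℂ) = fFun k})
    (hJ : (J : Set ↥HinfTwoDisks) = (fun g => a * g) '' (I : Set ↥HinfTwoDisks)) :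
    ¬ I.FG ∧ J.FG := by
  have hfmem : ∀ k : ℕ, 1 ≤ k → fElem k ∈ I := by
    intro k hk
    rw [hI]
    exact Ideal.subset_span ⟨k, hk, rfl⟩
  constructor
  · -- I is not finitely generated
    rintro ⟨T, hT⟩
    have hTmem : ∀ t ∈ T, ∃ K, 1 ≤ K ∧ Key K t := by
      intro t ht
      have : t ∈ I := by
        rw [← hT]
        exact Ideal.subset_span ht
      rw [hI] at this
      exact key_of_mem_spanF t this
    obtain ⟨K, hK1, hKall⟩ := finset_key T hTmem
    have hall : ∀ g ∈ I, Key K g := by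
      intro g hg
      rw [← hT] at hg
      exact key_span K _ (fun t ht => hKall t ht) g hg
    exact key_fail K hK1 (hall _ (hfmem (K + 1) (by omega)))
  · -- J is finitely generated
    refine ⟨{a * fElem 1}, ?_⟩
    apply le_antisymm
    · rw [Finset.coe_singleton, Ideal.span_le]
      intro x hx
      rw [Set.mem_singleton_iff] at hx
      subst hx
      rw [hJ]
      exact ⟨fElem 1, hfmem 1 le_rfl, rfl⟩
    · intro x hx
      rw [← SetLike.mem_coe, hJ] at hx
      obtain ⟨g, hgI, rfl⟩ := hx
      rw [Finset.coe_singleton]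
      rw [hI] at hgI
      exact mul_mem_span_aMul a ha g hgI
end

section
/- Let X be a metric space, A a function algebra on X, and x₀ ∈ X a peak point for A with associated peak function p ∈ A. Set eₙ = 1 - pⁿ for n ≥ 1. Then (eₙ) is a bounded approximate identity for the maximal ideal M(x₀) = {f ∈ A : f(x₀) = 0}: each eₙ ∈ M(x₀), the sequence (eₙ) is bounded in the supremum norm, and ‖eₙ·f - f‖_∞ → 0 as n → ∞ for every f ∈ M(x₀). -/
open BoundedContinuousFunction Filter

/-- Let `A` be a function algebra on a metric space `X` (a uniformly closed,
point-separating subalgebra of `C_b(X,ℂ)` containing the constants), and let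
`x₀` be a peak point for `A` with peak function `p`.  Then the functions
`eₙ = 1 - pⁿ` form a bounded approximate identity for
`M(x₀) = {f ∈ A : f(x₀) = 0}`: each `eₙ` lies in `M(x₀)`, the `eₙ` are
uniformly bounded, and `‖eₙ f - f‖_∞ → 0` for every `f ∈ M(x₀)`. -/
theorem noncoherent_stmt3 {X : Type*} [MetricSpace X]
    (A : Subalgebra ℂ (X →ᵇ ℂ)) (hclosed : IsClosed (A : Set (X →ᵇ ℂ)))
    (hsep : ∀ x y : X, x ≠ y → ∃ f ∈ A, f x ≠ f y)
    (x₀ : X) (p : X →ᵇ ℂ) (hpA : p ∈ A) (hp1 : p x₀ = 1)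
    (hpeak : ∀ U : Set X, IsOpen U → x₀ ∈ U →
      ∃ c < (1 : ℝ), ∀ x ∈ Uᶜ, ‖p x‖ ≤ c) :
    (∀ n : ℕ, 1 ≤ n → (1 - p ^ n) ∈ A ∧ (1 - p ^ n) x₀ = 0) ∧
    (∃ C : ℝ, ∀ n : ℕ, 1 ≤ n → ‖1 - p ^ n‖ ≤ C) ∧
    (∀ f ∈ A, f x₀ = 0 →
      Tendsto (fun n : ℕ => ‖(1 - p ^ n) * f - f‖) atTop (nhds 0)) := by
  -- |p x| ≤ 1 everywhere
  have hple : ∀ x : X, ‖p x‖ ≤ 1 := by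
    intro x
    by_cases hx : x = x₀
    · subst hx; rw [hp1]; simp
    · obtain ⟨c, hc1, hc⟩ := hpeak {x}ᶜ (isClosed_singleton.isOpen_compl)
        (by simp [Ne.symm hx])
      have := hc x (by simp)
      calc ‖p x‖ = ‖p x‖ := rfl
        _ ≤ c := this
        _ ≤ 1 := hc1.le
  refine ⟨?_, ⟨2, ?_⟩, ?_⟩
  · intro n hn
    constructor
    · exact A.sub_mem (A.one_mem) (A.pow_mem hpA n)
    · simp [hp1]
  · intro n hn
    refine (BoundedContinuousFunction.norm_le (by norm_num)).2 fun x => ?_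
    have hx : ((1 : X →ᵇ ℂ) - p ^ n) x = 1 - (p x) ^ n := by simp
    rw [hx]
    calc ‖1 - (p x) ^ n‖ ≤ ‖(1 : ℂ)‖ + ‖(p x) ^ n‖ := norm_sub_le _ _
      _ ≤ 1 + 1 := by
          rw [norm_pow]
          gcongr
          · simp
          · exact pow_le_one₀ (norm_nonneg _) (hple x)
      _ = 2 := by norm_num
  · intro f hfA hf0
    have hkey : ∀ n, (1 - p ^ n) * f - f = -(p ^ n * f) := by
      intro n; ring
    simp only [hkey, norm_neg]
    rw [NormedAddCommGroup.tendsto_nhds_zero]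
    intro ε hε
    -- continuity of f at x₀: find open U with ‖f x‖ < ε/2 on U
    have hcont : Continuous f := f.continuous
    have hmem : {x : X | ‖f x‖ < ε / 2} ∈ nhds x₀ := by
      have h := hcont.tendsto x₀
      rw [hf0] at h
      have := h (Metric.ball_mem_nhds (0 : ℂ) (half_pos hε))
      refine Filter.mem_of_superset this fun x hx => ?_
      simpa [Metric.mem_ball, dist_zero_right] using hx
    obtain ⟨U, hUsub, hUopen, hx₀U⟩ := mem_nhds_iff.1 hmem
    obtain ⟨c, hc1, hc⟩ := hpeak U hUopen hx₀U
    set c' := max c 0 with hc'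
    have hc'1 : c' < 1 := max_lt hc1 one_pos
    have hc'0 : 0 ≤ c' := le_max_right _ _
    have htend : Tendsto (fun n : ℕ => c' ^ n * ‖f‖) atTop (nhds 0) := by
      have := tendsto_pow_atTop_nhds_zero_of_lt_one hc'0 hc'1
      simpa using this.mul_const ‖f‖
    have hev : ∀ᶠ n : ℕ in atTop, c' ^ n * ‖f‖ < ε / 2 := by
      exact htend.eventually (Filter.Tendsto.eventually_lt_const (by simpa using half_pos hε) tendsto_id) |>.mono (fun n h => h)
    filter_upwards [hev] with n hn
    have hbound : ∀ x : X, ‖(p ^ n * f) x‖ ≤ ε / 2 := by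
      intro x
      have hx : (p ^ n * f) x = (p x) ^ n * f x := by
        simp
      rw [hx, norm_mul, norm_pow]
      by_cases hxU : x ∈ U
      · have h1 : ‖p x‖ ^ n ≤ 1 := pow_le_one₀ (norm_nonneg _) (hple x)
        have h2 : ‖f x‖ ≤ ε / 2 := (hUsub hxU).le
        calc ‖p x‖ ^ n * ‖f x‖ ≤ 1 * (ε / 2) := by
              apply mul_le_mul h1 h2 (norm_nonneg _) zero_le_one
          _ = ε / 2 := one_mul _
      · have h1 : ‖p x‖ ≤ c' := le_trans (hc x hxU) (le_max_left _ _)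
        have h2 : ‖f x‖ ≤ ‖f‖ := f.norm_coe_le_norm x
        calc ‖p x‖ ^ n * ‖f x‖ ≤ c' ^ n * ‖f‖ := by
              apply mul_le_mul (pow_le_pow_left₀ (norm_nonneg _) h1 n) h2 (norm_nonneg _)
                (pow_nonneg hc'0 n)
          _ ≤ ε / 2 := hn.le
    have hle : ‖p ^ n * f‖ ≤ ε / 2 :=
      (BoundedContinuousFunction.norm_le (le_of_lt (half_pos hε))).2 hbound
    calc ‖‖p ^ n * f‖‖ = ‖p ^ n * f‖ := norm_norm _
      _ ≤ ε / 2 := hle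
      _ < ε := half_lt_self hε
end

section
/- Let X be a metrizable space and A a function algebra on X. Suppose x₀ ∈ X is a non-isolated peak point for A and S : X∖{x₀} → ℂ is a bounded continuous function that is a multiplier for the maximal ideal M(x₀) = {f ∈ A : f(x₀) = 0}. Then A is not a coherent ring: if p ∈ M(x₀) is such that p·S extends to an element of A that is not a zero divisor, then the intersection of the two principal ideals of A generated by p and by the extension of p·S is not finitely generated. -/
set_option synthInstance.maxHeartbeats 1000000
set_option maxHeartbeats 2000000


open BoundedContinuousFunction Filter

lemma gleason_estimate {X : Type*} [TopologicalSpace X]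
    (A : Subalgebra ℂ (X →ᵇ ℂ)) (hclosed : IsClosed (A : Set (X →ᵇ ℂ))) (x₀ : X)
    {ι : Type*} [Fintype ι] (b : ι → ↥A)
    (hb0 : ∀ i, (b i : X →ᵇ ℂ) x₀ = 0)
    (hbspan : ∀ m : ↥A, (m : X →ᵇ ℂ) x₀ = 0 → ∃ c : ι → ↥A, ∑ i, c i * b i = m) :
    ∃ C > (0:ℝ), ∀ m : ↥A, (m : X →ᵇ ℂ) x₀ = 0 →
      ∃ c : ι → ↥A, (∑ i, c i * b i = m) ∧ ∀ i, ‖c i‖ ≤ C * ‖m‖ := by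
  classical
  haveI : CompleteSpace ↥A := hclosed.completeSpace_coe
  let evl : ↥A →ₗ[ℂ] ℂ :=
    { toFun := fun f => (f : X →ᵇ ℂ) x₀
      map_add' := by intro f g; simp
      map_smul' := by intro r f; simp }
  have hevc : ∀ f : ↥A, ‖evl f‖ ≤ 1 * ‖f‖ := by
    intro f
    show ‖(f : X →ᵇ ℂ) x₀‖ ≤ 1 * ‖f‖
    rw [one_mul]; exact ((f : X →ᵇ ℂ)).norm_coe_le_norm x₀
  let ev : ↥A →L[ℂ] ℂ := evl.mkContinuous 1 hevc
  let M : Submodule ℂ ↥A := LinearMap.ker (ev : ↥A →ₗ[ℂ] ℂ)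
  haveI : CompleteSpace M := by
    have : IsClosed (M : Set ↥A) := ContinuousLinearMap.isClosed_ker ev
    exact this.completeSpace_coe
  let Tlin : (ι → ↥A) →ₗ[ℂ] ↥A :=
    { toFun := fun c => ∑ i, c i * b i
      map_add' := by intro c d; simp [add_mul, Finset.sum_add_distrib]
      map_smul' := by intro r c; simp [smul_mul_assoc, Finset.smul_sum] }
  have hTb : ∀ c : ι → ↥A, ‖Tlin c‖ ≤ (∑ i, ‖b i‖) * ‖c‖ := by
    intro c
    calc ‖∑ i, c i * b i‖ ≤ ∑ i, ‖c i * b i‖ := norm_sum_le _ _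
      _ ≤ ∑ i, ‖c‖ * ‖b i‖ := by
          apply Finset.sum_le_sum
          intro i _
          calc ‖c i * b i‖ ≤ ‖c i‖ * ‖b i‖ := norm_mul_le _ _
            _ ≤ ‖c‖ * ‖b i‖ := by
                have h1 := norm_le_pi_norm c i
                have hb : (0:ℝ) ≤ ‖b i‖ := norm_nonneg _
                nlinarith [norm_nonneg (c i)]
      _ = (∑ i, ‖b i‖) * ‖c‖ := by
          rw [Finset.sum_mul]; exact Finset.sum_congr rfl fun i _ => mul_comm _ _
  let Tc : (ι → ↥A) →L[ℂ] ↥A := Tlin.mkContinuous _ hTb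
  have hmem : ∀ c : ι → ↥A, Tc c ∈ M := by
    intro c
    have hTcc : Tc c = ∑ i, c i * b i := rfl
    have : ((∑ i, c i * b i : ↥A) : X →ᵇ ℂ) x₀ = 0 := by
      rw [AddSubmonoidClass.coe_finset_sum]
      rw [BoundedContinuousFunction.coe_sum]
      simp only [Finset.sum_apply]
      apply Finset.sum_eq_zero
      intro i _
      have : ((c i * b i : ↥A) : X →ᵇ ℂ) = (c i : X →ᵇ ℂ) * (b i : X →ᵇ ℂ) := rfl
      rw [this]
      simp [hb0 i]
    simpa [M, ev, evl, LinearMap.mem_ker, hTcc] using this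
  let T : (ι → ↥A) →L[ℂ] ↥M := Tc.codRestrict M hmem
  have hsurj : Function.Surjective T := by
    rintro ⟨m, hm⟩
    have hm0 : (m : X →ᵇ ℂ) x₀ = 0 := hm
    obtain ⟨c, hc⟩ := hbspan m hm0
    exact ⟨c, Subtype.ext hc⟩
  obtain ⟨C, hC, hpre⟩ := ContinuousLinearMap.exists_preimage_norm_le (E := ι → ↥A) (F := ↥M) (𝕜 := ℂ) (𝕜' := ℂ) (σ := RingHom.id ℂ) T hsurj
  refine ⟨C, hC, ?_⟩
  intro m hm0
  have hmM : m ∈ M := hm0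
  obtain ⟨c, hc, hnc⟩ := hpre ⟨m, hmM⟩
  refine ⟨c, ?_, ?_⟩
  · exact congrArg Subtype.val hc
  · intro i
    have h1 : ‖c i‖ ≤ ‖c‖ := norm_le_pi_norm c i
    have h2 : ‖(⟨m, hmM⟩ : ↥M)‖ = ‖m‖ := rfl
    rw [h2] at hnc
    linarith

/-- sufficient criterion for noncoherence.
Let `A` be a function algebra on a metrizable space `X` (a uniformly closed,
point-separating subalgebra of `C_b(X,ℂ)`), let `x₀ ∈ X` be a non-isolated
peak point for `A`, and let `S : X∖{x₀} → ℂ` be a bounded continuous multiplier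
for `M(x₀) = {f ∈ A : f(x₀) = 0}`.  Then `A` is not coherent: if `p ∈ M(x₀)` is
such that `p·S` extends to an element `q` of `A` that is not a zero divisor,
then the intersection of the principal ideals generated by `p` and by `q` is
not finitely generated. -/
theorem noncoherent_stmt4 {X : Type*} [TopologicalSpace X]
    [TopologicalSpace.MetrizableSpace X]
    (A : Subalgebra ℂ (X →ᵇ ℂ)) (hclosed : IsClosed (A : Set (X →ᵇ ℂ)))
    (hsep : ∀ x y : X, x ≠ y → ∃ f ∈ A, f x ≠ f y)
    (x₀ : X)
    -- `x₀` is non-isolated: a limit of a sequence of points distinct from it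
    (hni : ∃ u : ℕ → X, (∀ k, u k ≠ x₀) ∧ Tendsto u atTop (nhds x₀))
    -- `x₀` is a peak point for `A`
    (ppeak : X →ᵇ ℂ) (hppeakA : ppeak ∈ A) (hppeak1 : ppeak x₀ = 1)
    (hpeak : ∀ U : Set X, IsOpen U → x₀ ∈ U →
      ∃ c < (1 : ℝ), ∀ x ∈ Uᶜ, ‖ppeak x‖ ≤ c)
    -- `S` is a bounded continuous function on `X∖{x₀}`
    (S : {x : X // x ≠ x₀} →ᵇ ℂ)
    -- `S` is a multiplier for `M(x₀)`: the ideal of `f ∈ A` such that `S·f`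
    -- extends continuously to an element of `A` is exactly `M(x₀)` …
    (hmult : ∀ f : ↥A,
      ((∃ g : ↥A, ∀ (x : X) (hx : x ≠ x₀),
          (g : X →ᵇ ℂ) x = S ⟨x, hx⟩ * (f : X →ᵇ ℂ) x)
        ↔ (f : X →ᵇ ℂ) x₀ = 0))
    -- … and `p ∈ M(x₀)` is such that `p·S` extends to `q ∈ A`,
    -- which is not a zero divisor
    (p q : ↥A) (hp0 : (p : X →ᵇ ℂ) x₀ = 0)
    (hq : ∀ (x : X) (hx : x ≠ x₀),
      (q : X →ᵇ ℂ) x = (p : X →ᵇ ℂ) x * S ⟨x, hx⟩)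
    (hqnzd : ∀ b : ↥A, q * b = 0 → b = 0) :
    ¬ ((Ideal.span {p} : Ideal ↥A) ⊓ Ideal.span {q}).FG := by
    classical
  intro hFG
  obtain ⟨u, hu, hut⟩ := hni
  -- coercion helpers
  have cmul : ∀ (f g : ↥A) (x : X),
      ((f * g : ↥A) : X →ᵇ ℂ) x = (f : X →ᵇ ℂ) x * (g : X →ᵇ ℂ) x := fun f g x => rfl
  have ext_eq : ∀ (f g : ↥A), (∀ x, (f : X →ᵇ ℂ) x = (g : X →ᵇ ℂ) x) → f = g :=
    fun f g h => Subtype.ext (BoundedContinuousFunction.ext h)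
  -- peak function strictly less than 1 away from x₀
  have hlt1 : ∀ x : X, x ≠ x₀ → ‖ppeak x‖ < 1 := by
    intro x hx
    obtain ⟨c, hc, hcb⟩ := hpeak {x}ᶜ isOpen_compl_singleton (by simp [Ne.symm hx])
    have := hcb x (by simp)
    linarith
  -- q vanishes at x₀
  have hq0 : (q : X →ᵇ ℂ) x₀ = 0 := by
    have h1 : Tendsto (fun k => (q : X →ᵇ ℂ) (u k)) atTop (nhds ((q : X →ᵇ ℂ) x₀)) :=
      ((q : X →ᵇ ℂ).continuous.tendsto x₀).comp hut
    have hp : Tendsto (fun k => ‖(p : X →ᵇ ℂ) (u k)‖) atTop (nhds 0) := by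
      have := ((p : X →ᵇ ℂ).continuous.tendsto x₀).comp hut
      rw [hp0] at this
      simpa using this.norm
    have hb : ∀ k, ‖(q : X →ᵇ ℂ) (u k)‖ ≤ ‖(p : X →ᵇ ℂ) (u k)‖ * ‖S‖ := by
      intro k
      rw [hq (u k) (hu k), norm_mul]
      gcongr
      exact S.norm_coe_le_norm _
    have h2 : Tendsto (fun k => (q : X →ᵇ ℂ) (u k)) atTop (nhds 0) :=
      squeeze_zero_norm hb (by simpa using hp.mul_const ‖S‖)
    exact tendsto_nhds_unique h1 h2
  -- p is not a zero divisor
  have hpnzd : ∀ b : ↥A, p * b = 0 → b = 0 := by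
    intro b hb
    apply hqnzd
    have hpb : ∀ x, (p : X →ᵇ ℂ) x * (b : X →ᵇ ℂ) x = 0 := by
      intro x
      have := congrArg (fun f : ↥A => (f : X →ᵇ ℂ) x) hb
      simpa [cmul] using this
    apply ext_eq
    intro x
    rw [cmul]
    by_cases hx : x = x₀
    · subst hx; simp [hq0]
    · rw [hq x hx, mul_right_comm, hpb x, zero_mul]
      rfl
  -- q · M(x₀) ⊆ I
  have hqM : ∀ m : ↥A, (m : X →ᵇ ℂ) x₀ = 0 →
      q * m ∈ (Ideal.span {p} : Ideal ↥A) ⊓ Ideal.span {q} := by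
    intro m hm
    obtain ⟨g, hg⟩ := (hmult m).mpr hm
    refine Submodule.mem_inf.mpr ⟨?_, ?_⟩
    · have hqm : q * m = p * g := by
        apply ext_eq
        intro x
        rw [cmul, cmul]
        by_cases hx : x = x₀
        · subst hx; rw [hq0, hp0, zero_mul, zero_mul]
        · rw [hq x hx, hg x hx]; ring
      rw [hqm]
      exact Ideal.mem_span_singleton'.mpr ⟨g, mul_comm g p⟩
    · exact Ideal.mem_span_singleton'.mpr ⟨m, mul_comm m q⟩
  -- no a with q = p * a
  have hnpa : ∀ a : ↥A, q ≠ p * a := by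
    intro a ha
    set P : ↥A := ⟨ppeak, hppeakA⟩ with hP
    have hm0 : ((1 - P : ↥A) : X →ᵇ ℂ) x₀ = 0 := by
      have : ((1 - P : ↥A) : X →ᵇ ℂ) x₀ = 1 - ppeak x₀ := rfl
      rw [this, hppeak1, sub_self]
    obtain ⟨g, hg⟩ := (hmult (1 - P)).mpr hm0
    have h1 : p * g = q * (1 - P) := by
      apply ext_eq
      intro x
      rw [cmul, cmul]
      by_cases hx : x = x₀
      · subst hx; rw [hp0, hq0, zero_mul, zero_mul]
      · rw [hg x hx, hq x hx]; ring
    have h2 : p * (g - a * (1 - P)) = 0 := by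
      rw [mul_sub, h1, ha]; ring
    have h3 : g = a * (1 - P) := by
      have := hpnzd _ h2
      have := sub_eq_zero.mp this
      exact this
    have hone : ((1 : ↥A) : X →ᵇ ℂ) x₀ = 0 := by
      apply (hmult 1).mp
      refine ⟨a, ?_⟩
      intro x hx
      have hgx := hg x hx
      have hgx2 : (g : X →ᵇ ℂ) x = (a : X →ᵇ ℂ) x * ((1 - P : ↥A) : X →ᵇ ℂ) x := by
        rw [h3]; exact cmul a (1 - P) x
      have hne : ((1 - P : ↥A) : X →ᵇ ℂ) x ≠ 0 := by
        have h1P : ((1 - P : ↥A) : X →ᵇ ℂ) x = 1 - ppeak x := rfl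
        rw [h1P]
        intro hzero
        have : ppeak x = 1 := by
          have := sub_eq_zero.mp hzero
          exact this.symm
        have hcon := hlt1 x hx
        rw [this] at hcon
        simp at hcon
      have hax : (a : X →ᵇ ℂ) x = S ⟨x, hx⟩ :=
        mul_right_cancel₀ hne (by rw [← hgx2, hgx])
      have h1x : ((1 : ↥A) : X →ᵇ ℂ) x = 1 := rfl
      rw [h1x, mul_one, hax]
    have : (1 : ℂ) = 0 := by simpa using hone
    exact one_ne_zero this
  -- unpack the finite generation hypothesis
  obtain ⟨T, hT⟩ := hFG
  have hTq : ∀ t : ↥A, t ∈ T → ∃ b, q * b = t := by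
    intro t ht
    have h1 : t ∈ Ideal.span (T : Set ↥A) := Ideal.subset_span ht
    rw [hT] at h1
    obtain ⟨b, hb⟩ := Ideal.mem_span_singleton'.mp h1.2
    exact ⟨b, by rw [mul_comm]; exact hb⟩
  let β : {t : ↥A // t ∈ T} → ↥A := fun t => (hTq t.1 t.2).choose
  have hβ : ∀ t : {t : ↥A // t ∈ T}, q * β t = t.1 := fun t => (hTq t.1 t.2).choose_spec
  have hrange : Set.range (fun t : {t : ↥A // t ∈ T} => (t.1 : ↥A)) = (T : Set ↥A) := by
    ext x; simp [Subtype.range_coe_subtype]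
  set J : Ideal ↥A := Ideal.span (Set.range β) with hJdef
  -- M(x₀) ⊆ J
  have hMJ : ∀ m : ↥A, (m : X →ᵇ ℂ) x₀ = 0 → m ∈ J := by
    intro m hm
    have h1 : q * m ∈ Ideal.span (T : Set ↥A) := by rw [hT]; exact hqM m hm
    rw [← hrange] at h1
    obtain ⟨c, hc⟩ := (Submodule.mem_span_range_iff_exists_fun ↥A).mp h1
    have h2 : q * (∑ t, c t * β t) = q * m := by
      rw [Finset.mul_sum, ← hc]
      refine Finset.sum_congr rfl ?_
      intro t _
      rw [smul_eq_mul, ← hβ t]; ring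
    have h3 : q * ((∑ t, c t * β t) - m) = 0 := by rw [mul_sub, h2, sub_self]
    have h4 := sub_eq_zero.mp (hqnzd _ h3)
    rw [← h4]
    exact Ideal.sum_mem _ fun t _ => Ideal.mul_mem_left _ _ (Ideal.subset_span ⟨t, rfl⟩)
  -- J is proper
  have hJtop : J ≠ ⊤ := by
    intro htop
    have h1 : (1 : ↥A) ∈ Ideal.span (Set.range β) := by
      rw [← hJdef, htop]; exact Submodule.mem_top
    obtain ⟨c, hc⟩ := (Submodule.mem_span_range_iff_exists_fun ↥A).mp h1
    have h2 : q = ∑ t, c t * (t.1 : ↥A) := by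
      calc q = q * 1 := (mul_one q).symm
        _ = q * ∑ t, c t • β t := by rw [hc]
        _ = ∑ t, c t * (q * β t) := by
            rw [Finset.mul_sum]
            exact Finset.sum_congr rfl fun t _ => by rw [smul_eq_mul]; ring
        _ = ∑ t, c t * (t.1 : ↥A) := Finset.sum_congr rfl fun t _ => by rw [hβ t]
    have h3 : q ∈ Ideal.span (T : Set ↥A) := by
      rw [h2]
      exact Ideal.sum_mem _ fun t _ => Ideal.mul_mem_left _ _ (Ideal.subset_span t.2)
    rw [hT] at h3
    obtain ⟨a, haq⟩ := Ideal.mem_span_singleton'.mp h3.1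
    exact hnpa a (by rw [← haq, mul_comm])
  -- the maximal ideal at x₀
  let χ : ↥A →+* ℂ :=
    { toFun := fun f => (f : X →ᵇ ℂ) x₀
      map_one' := rfl
      map_mul' := fun f g => rfl
      map_zero' := rfl
      map_add' := fun f g => rfl }
  have hχs : Function.Surjective χ := by
    intro z
    refine ⟨z • 1, ?_⟩
    show ((z • (1:↥A) : ↥A) : X →ᵇ ℂ) x₀ = z
    simp
  have hker : RingHom.ker χ ≤ J := fun m hm => hMJ m hm
  have hJM : RingHom.ker χ = J :=
    (RingHom.ker_isMaximal_of_surjective χ hχs).eq_of_le hJtop hker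
  have hb0 : ∀ t, (β t : X →ᵇ ℂ) x₀ = 0 := by
    intro t
    have h1 : β t ∈ J := Ideal.subset_span ⟨t, rfl⟩
    rw [← hJM] at h1
    exact h1
  have hbspan : ∀ m : ↥A, (m : X →ᵇ ℂ) x₀ = 0 →
      ∃ c : {t : ↥A // t ∈ T} → ↥A, ∑ t, c t * β t = m := by
    intro m hm
    obtain ⟨c, hc⟩ := (Submodule.mem_span_range_iff_exists_fun ↥A).mp (hMJ m hm)
    exact ⟨c, by simpa [smul_eq_mul] using hc⟩
  obtain ⟨C, hC, hest⟩ := gleason_estimate A hclosed x₀ β hb0 hbspan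
  -- the coefficient sums tend to zero along u
  have hδt : Tendsto (fun k => ∑ t, ‖(β t : X →ᵇ ℂ) (u k)‖) atTop (nhds 0) := by
    have h1 : ∀ t : {t : ↥A // t ∈ T},
        Tendsto (fun k => ‖(β t : X →ᵇ ℂ) (u k)‖) atTop (nhds 0) := by
      intro t
      have h2 := ((β t : X →ᵇ ℂ).continuous.tendsto x₀).comp hut
      rw [hb0 t] at h2
      simpa using h2.norm
    have h3 := tendsto_finset_sum Finset.univ (fun t (_ : t ∈ Finset.univ) => h1 t)
    simpa using h3
  obtain ⟨k, hk⟩ := ((tendsto_order.1 hδt).2 (1/(4*C)) (by positivity)).exists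
  -- build the test function 1 - ppeak^j
  set P : ↥A := ⟨ppeak, hppeakA⟩ with hPd
  set r : ℝ := ‖ppeak (u k)‖ with hrd
  have hr1 : r < 1 := by
    have := hlt1 (u k) (hu k)
    simpa [hrd] using this
  obtain ⟨j, hj1, hj⟩ : ∃ j : ℕ, 1 ≤ j ∧ r ^ j < 1/4 := by
    have h1 := tendsto_pow_atTop_nhds_zero_of_lt_one (norm_nonneg _) hr1
    have h2 := ((tendsto_order.1 h1).2 (1/4) (by norm_num)).and (eventually_ge_atTop 1)
    obtain ⟨j, hja, hjb⟩ := h2.exists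
    exact ⟨j, hjb, hja⟩
  set m : ↥A := 1 - P ^ j with hmd
  have hmx : ∀ x : X, (m : X →ᵇ ℂ) x = 1 - (ppeak x) ^ j := by
    intro x
    show ((1 - P ^ j : ↥A) : X →ᵇ ℂ) x = 1 - (ppeak x) ^ j
    simp [hPd]
  have hm0 : (m : X →ᵇ ℂ) x₀ = 0 := by rw [hmx, hppeak1, one_pow, sub_self]
  have hPle1 : ‖P‖ ≤ 1 := by
    show ‖ppeak‖ ≤ 1
    refine (BoundedContinuousFunction.norm_le zero_le_one).mpr fun x => ?_
    by_cases hx : x = x₀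
    · subst hx; rw [hppeak1]; simp
    · exact le_of_lt (by simpa using hlt1 x hx)
  have hmnorm : ‖m‖ ≤ 2 := by
    have h1 : ‖(1:↥A)‖ ≤ 1 := by
      show ‖((1:↥A) : X →ᵇ ℂ)‖ ≤ 1
      refine (BoundedContinuousFunction.norm_le zero_le_one).mpr fun x => ?_
      simp
    have h2 : ‖P ^ j‖ ≤ 1 := by
      calc ‖P ^ j‖ ≤ ‖P‖ ^ j := norm_pow_le' P hj1
        _ ≤ 1 := pow_le_one₀ (norm_nonneg _) hPle1
    calc ‖m‖ ≤ ‖(1:↥A)‖ + ‖P ^ j‖ := norm_sub_le _ _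
      _ ≤ 2 := by linarith
  obtain ⟨c, hcsum, hcb⟩ := hest m hm0
  -- the upper bound
  have heval : (m : X →ᵇ ℂ) (u k)
      = ∑ t, (c t : X →ᵇ ℂ) (u k) * (β t : X →ᵇ ℂ) (u k) := by
    rw [← hcsum]
    rw [AddSubmonoidClass.coe_finset_sum, BoundedContinuousFunction.coe_sum]
    simp only [Finset.sum_apply]
    rfl
  have hup : ‖(m : X →ᵇ ℂ) (u k)‖ ≤ C * 2 * (∑ t, ‖(β t : X →ᵇ ℂ) (u k)‖) := by
    rw [heval]
    calc ‖∑ t, (c t : X →ᵇ ℂ) (u k) * (β t : X →ᵇ ℂ) (u k)‖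
        ≤ ∑ t, ‖(c t : X →ᵇ ℂ) (u k) * (β t : X →ᵇ ℂ) (u k)‖ := norm_sum_le _ _
      _ ≤ ∑ t, (C * 2) * ‖(β t : X →ᵇ ℂ) (u k)‖ := by
          apply Finset.sum_le_sum
          intro t _
          rw [norm_mul]
          have h1 : ‖(c t : X →ᵇ ℂ) (u k)‖ ≤ ‖c t‖ := (c t : X →ᵇ ℂ).norm_coe_le_norm (u k)
          have h2 : ‖c t‖ ≤ C * ‖m‖ := hcb t
          have h3 : C * ‖m‖ ≤ C * 2 := by
            apply mul_le_mul_of_nonneg_left hmnorm (le_of_lt hC)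
          have h4 : (0:ℝ) ≤ ‖(β t : X →ᵇ ℂ) (u k)‖ := norm_nonneg _
          nlinarith
      _ = C * 2 * (∑ t, ‖(β t : X →ᵇ ℂ) (u k)‖) := by rw [Finset.mul_sum]
  -- the lower bound
  have hlow : (3:ℝ)/4 ≤ ‖(m : X →ᵇ ℂ) (u k)‖ := by
    rw [hmx (u k)]
    have h1 : ‖(1:ℂ)‖ - ‖(ppeak (u k)) ^ j‖ ≤ ‖1 - (ppeak (u k)) ^ j‖ :=
      norm_sub_norm_le _ _
    have h2 : ‖(ppeak (u k)) ^ j‖ = r ^ j := by rw [norm_pow]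
    have h3 : ‖(1:ℂ)‖ = 1 := norm_one
    linarith
  -- contradiction
  have hfinal : C * 2 * (∑ t, ‖(β t : X →ᵇ ℂ) (u k)‖) < 1/2 := by
    have hnn : (0:ℝ) ≤ ∑ t, ‖(β t : X →ᵇ ℂ) (u k)‖ :=
      Finset.sum_nonneg fun t _ => norm_nonneg _
    have h5 : C * 2 * (∑ t, ‖(β t : X →ᵇ ℂ) (u k)‖) < C * 2 * (1/(4*C)) := by
      apply mul_lt_mul_of_pos_left hk (by positivity)
    have h6 : C * 2 * (1/(4*C)) = 1/2 := by field_simp; ring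
    linarith
  linarith
end

section
/- For every n ≥ 1, the polydisk algebra A(D̄ⁿ) — the algebra of all continuous complex-valued functions on the closed unit polydisk D̄ⁿ = {z ∈ ℂⁿ : |zⱼ| ≤ 1 for all j} that are holomorphic on the open polydisk {z : |zⱼ| < 1 for all j} — is not coherent: there exist two finitely generated ideals of A(D̄ⁿ) whose intersection is not finitely generated. -/
open scoped Classical

/-- The extension by `0` of a continuous function on `K` to the ambient space. -/
noncomputable def extendByZero {n : ℕ} {K : Set (Fin n → ℂ)} (f : C(K, ℂ)) :
    (Fin n → ℂ) → ℂ :=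
  fun z => if h : z ∈ K then f ⟨z, h⟩ else 0

/-- `A(K)`: the uniform algebra of continuous functions on the compact set
`K ⊆ ℂⁿ` that are holomorphic on the interior of `K`, realized as a subalgebra
of `C(K, ℂ)`. -/
noncomputable def diskAlgebraOf {n : ℕ} (K : Set (Fin n → ℂ)) :
    Subalgebra ℂ C(K, ℂ) where
  carrier := {f | DifferentiableOn ℂ (extendByZero f) (interior K)}
  mul_mem' := by
    intro f g hf hg
    exact (hf.mul hg).congr fun z hz => by
      simp [extendByZero, dif_pos (interior_subset hz)]
  add_mem' := by
    intro f g hf hg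
    exact (hf.add hg).congr fun z hz => by
      simp [extendByZero, dif_pos (interior_subset hz)]
  algebraMap_mem' := by
    intro c
    exact (differentiableOn_const c).congr fun z hz => by
      simp [extendByZero, dif_pos (interior_subset hz)]

/-- The closed unit polydisk `D̄ⁿ = {z ∈ ℂⁿ : |zⱼ| ≤ 1 for all j}`. -/
def closedUnitPolydisk (n : ℕ) : Set (Fin n → ℂ) :=
  {z | ∀ j, ‖z j‖ ≤ 1}

open Complex Filter Set
set_option synthInstance.maxHeartbeats 1000000
set_option maxHeartbeats 1600000

noncomputable section

namespace NC

def gterm (x : ℕ → ℝ) (i : ℕ) (ζ : ℂ) : ℂ :=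
  (1/2 : ℂ) ^ i * Complex.exp (-(ζ - (x i : ℂ)) ^ 2)

def gfun (x : ℕ → ℝ) (ζ : ℂ) : ℂ := ∑' i, gterm x i ζ

def Sfun (x : ℕ → ℝ) (t : ℝ) : ℝ :=
  ∑' i, (1/2 : ℝ) ^ i * Real.exp (Real.pi ^ 2 - (t - x i) ^ 2)

lemma re_neg_sq (ζ : ℂ) (c : ℝ) : (-(ζ - (c:ℂ)) ^ 2).re = (ζ.im)^2 - (ζ.re - c)^2 := by
  simp only [pow_two, neg_re, Complex.mul_re, Complex.sub_re, Complex.sub_im,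
    Complex.ofReal_re, Complex.ofReal_im]
  ring

lemma norm_gterm_le {x : ℕ → ℝ} {ζ : ℂ} (hζ : |ζ.im| ≤ Real.pi) (i : ℕ) :
    ‖gterm x i ζ‖ ≤ (1/2 : ℝ) ^ i * Real.exp (Real.pi ^ 2 - (ζ.re - x i) ^ 2) := by
  rw [gterm, norm_mul, norm_pow]
  have h1 : ‖(1/2 : ℂ)‖ = (1/2 : ℝ) := by norm_num
  rw [h1]
  apply mul_le_mul_of_nonneg_left ?_ (by positivity)
  rw [Complex.norm_exp, re_neg_sq]
  apply Real.exp_le_exp.2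
  have : ζ.im ^ 2 ≤ Real.pi ^ 2 := by
    rw [← _root_.sq_abs]
    exact pow_le_pow_left₀ (abs_nonneg _) hζ 2
  linarith

lemma summable_half : Summable (fun i : ℕ => (1/2 : ℝ) ^ i) :=
  summable_geometric_of_lt_one (by norm_num) (by norm_num)

lemma summable_Sterm (x : ℕ → ℝ) (t : ℝ) :
    Summable (fun i => (1/2 : ℝ) ^ i * Real.exp (Real.pi ^ 2 - (t - x i) ^ 2)) := by
  apply Summable.of_nonneg_of_le (fun i => by positivity) (fun i => ?_)
    (summable_half.mul_right (Real.exp (Real.pi ^ 2)))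
  have h2 : Real.exp (Real.pi ^ 2 - (t - x i) ^ 2) ≤ Real.exp (Real.pi ^ 2) := by
    apply Real.exp_le_exp.2; nlinarith [sq_nonneg (t - x i)]
  calc (1/2 : ℝ) ^ i * Real.exp (Real.pi ^ 2 - (t - x i) ^ 2)
      ≤ (1/2 : ℝ) ^ i * Real.exp (Real.pi ^ 2) :=
        mul_le_mul_of_nonneg_left h2 (by positivity)
    _ = _ := rfl

lemma summable_norm_gterm {x : ℕ → ℝ} {ζ : ℂ} (hζ : |ζ.im| ≤ Real.pi) :
    Summable (fun i => ‖gterm x i ζ‖) :=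
  Summable.of_nonneg_of_le (fun i => norm_nonneg _) (norm_gterm_le hζ) (summable_Sterm x ζ.re)

lemma norm_gfun_le {x : ℕ → ℝ} {ζ : ℂ} (hζ : |ζ.im| ≤ Real.pi) :
    ‖gfun x ζ‖ ≤ Sfun x ζ.re := by
  calc ‖gfun x ζ‖ ≤ ∑' i, ‖gterm x i ζ‖ := norm_tsum_le_tsum_norm (summable_norm_gterm hζ)
    _ ≤ Sfun x ζ.re := Summable.tsum_le_tsum (norm_gterm_le hζ) (summable_norm_gterm hζ) (summable_Sterm x ζ.re)

lemma Sfun_nonneg (x : ℕ → ℝ) (t : ℝ) : 0 ≤ Sfun x t :=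
  tsum_nonneg (fun i => by positivity)

lemma Sfun_tendsto (x : ℕ → ℝ) : Tendsto (Sfun x) atTop (nhds 0) := by
  have h0 : (0 : ℝ) = ∑' (_ : ℕ), (0:ℝ) := by simp
  rw [show nhds (0:ℝ) = nhds (∑' (_ : ℕ), (0:ℝ)) by rw [← h0]]
  apply tendsto_tsum_of_dominated_convergence
    (bound := fun i => (1/2 : ℝ) ^ i * Real.exp (Real.pi ^ 2))
  · exact summable_half.mul_right _
  · intro i
    have h1 : Tendsto (fun t : ℝ => Real.pi ^ 2 - (t - x i) ^ 2) atTop atBot := by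
      apply Filter.tendsto_atBot_add_const_left atTop (Real.pi ^ 2)
      have h2 : Tendsto (fun t : ℝ => (t - x i) ^ 2) atTop atTop :=
        (tendsto_pow_atTop (two_ne_zero)).comp (tendsto_atTop_add_const_right _ (-(x i)) tendsto_id)
      exact (Filter.tendsto_neg_atBot_iff.2 h2)
    have := (Real.tendsto_exp_atBot.comp h1).const_mul ((1/2 : ℝ) ^ i)
    simpa using this
  · filter_upwards with t i
    rw [Real.norm_of_nonneg (by positivity)]
    apply mul_le_mul_of_nonneg_left ?_ (by positivity)
    apply Real.exp_le_exp.2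
    nlinarith [sq_nonneg (t - x i)]


def strip : Set ℂ := {ζ : ℂ | |ζ.im| < Real.pi}

lemma isOpen_strip : IsOpen strip := by
  have : strip = (fun ζ : ℂ => ζ.im) ⁻¹' (Set.Ioo (-Real.pi) Real.pi) := by
    ext ζ; simp [strip, abs_lt, Set.mem_Ioo, and_comm]
  rw [this]
  exact IsOpen.preimage Complex.continuous_im isOpen_Ioo

lemma gfun_differentiableOn (x : ℕ → ℝ) : DifferentiableOn ℂ (gfun x) strip := by
  apply TendstoLocallyUniformlyOn.differentiableOn
    (F := fun (s : Finset ℕ) (ζ : ℂ) => ∑ i ∈ s, gterm x i ζ) (φ := atTop)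
  · apply TendstoUniformlyOn.tendstoLocallyUniformlyOn
    apply tendstoUniformlyOn_tsum (u := fun i => (1/2 : ℝ) ^ i * Real.exp (Real.pi ^ 2))
      (summable_half.mul_right _)
    intro i ζ hζ
    calc ‖gterm x i ζ‖ ≤ (1/2 : ℝ) ^ i * Real.exp (Real.pi ^ 2 - (ζ.re - x i) ^ 2) :=
          norm_gterm_le (le_of_lt hζ) i
      _ ≤ (1/2 : ℝ) ^ i * Real.exp (Real.pi ^ 2) := by
          apply mul_le_mul_of_nonneg_left ?_ (by positivity)
          apply Real.exp_le_exp.2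
          nlinarith [sq_nonneg (ζ.re - x i)]
  · filter_upwards with s
    apply DifferentiableOn.fun_sum
    intro i _
    apply Differentiable.differentiableOn
    apply Differentiable.const_mul
    apply Complex.differentiable_exp.comp
    apply Differentiable.neg
    exact (differentiable_id.sub_const _).pow 2
  · exact isOpen_strip

lemma gfun_continuousAt {x : ℕ → ℝ} {ζ : ℂ} (hζ : |ζ.im| < Real.pi) :
    ContinuousAt (gfun x) ζ :=
  ((gfun_differentiableOn x).continuousOn).continuousAt (isOpen_strip.mem_nhds hζ)

lemma gfun_real (x : ℕ → ℝ) (t : ℝ) :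
    gfun x (t : ℂ) = ((∑' i, (1/2 : ℝ) ^ i * Real.exp (-(t - x i) ^ 2) : ℝ) : ℂ) := by
  rw [gfun, Complex.ofReal_tsum]
  congr 1
  ext i
  rw [gterm, show -((t:ℂ) - ((x i : ℝ):ℂ))^2 = ((-(t - x i)^2 : ℝ) : ℂ) by push_cast; ring,
    ← Complex.ofReal_exp]
  push_cast
  ring

lemma summable_lower (x : ℕ → ℝ) (t : ℝ) :
    Summable (fun i => (1/2 : ℝ) ^ i * Real.exp (-(t - x i) ^ 2)) := by
  apply Summable.of_nonneg_of_le (fun i => by positivity) (fun i => ?_) summable_half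
  calc (1/2 : ℝ) ^ i * Real.exp (-(t - x i) ^ 2)
      ≤ (1/2 : ℝ) ^ i * 1 := by
        apply mul_le_mul_of_nonneg_left ?_ (by positivity)
        rw [Real.exp_le_one_iff]; nlinarith [sq_nonneg (t - x i)]
    _ = (1/2 : ℝ) ^ i := mul_one _

lemma gfun_lower (x : ℕ → ℝ) (j : ℕ) : (1/2 : ℝ) ^ j ≤ ‖gfun x ((x j : ℝ) : ℂ)‖ := by
  rw [gfun_real, Complex.norm_real, Real.norm_eq_abs]
  have h1 : (1/2 : ℝ) ^ j ≤ ∑' i, (1/2 : ℝ) ^ i * Real.exp (-(x j - x i) ^ 2) := by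
    have := Summable.le_tsum (summable_lower x (x j)) j (fun i _ => by positivity)
    simpa using this
  calc (1/2:ℝ)^j ≤ _ := h1
    _ ≤ |_| := le_abs_self _


/-! ### One-variable functions -/

def cdisc : Set ℂ := {w : ℂ | ‖w‖ ≤ 1}

def Efun (w : ℂ) : ℂ := Complex.exp ((w + 1)/(w - 1))

def Qfun (w : ℂ) : ℂ := if w = 1 then 0 else (1 - w) * Efun w

def hone (x : ℕ → ℝ) (w : ℂ) : ℂ := if w = 1 then 0 else gfun x (-(Complex.log (1 - w)))

def Rone (x : ℕ → ℝ) (w : ℂ) : ℂ :=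
  if w = 1 then 0 else Efun w * gfun x (-(Complex.log (1 - w)))

lemma re_lt_one {w : ℂ} (hw : ‖w‖ ≤ 1) (hw1 : w ≠ 1) : w.re < 1 := by
  rcases lt_or_eq_of_le (le_trans (Complex.re_le_norm w) hw) with h | h
  · exact h
  · exfalso
    apply hw1
    have h2 : Complex.normSq w ≤ 1 := by
      rw [Complex.normSq_eq_norm_sq]
      nlinarith [norm_nonneg w]
    rw [Complex.normSq_apply, h] at h2
    have : w.im = 0 := by nlinarith [sq_nonneg w.im]
    exact Complex.ext h this

lemma one_sub_re_pos {w : ℂ} (hw : ‖w‖ ≤ 1) (hw1 : w ≠ 1) : 0 < (1 - w).re := by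
  have := re_lt_one hw hw1
  simp only [Complex.sub_re, Complex.one_re]
  linarith

lemma one_sub_mem_slitPlane {w : ℂ} (hw : ‖w‖ ≤ 1) (hw1 : w ≠ 1) :
    (1 - w) ∈ Complex.slitPlane :=
  Complex.mem_slitPlane_iff.2 (Or.inl (one_sub_re_pos hw hw1))

lemma zeta_im {w : ℂ} (hw : ‖w‖ ≤ 1) (hw1 : w ≠ 1) :
    |(-(Complex.log (1 - w))).im| ≤ Real.pi / 2 := by
  rw [Complex.neg_im, abs_neg, Complex.log_im]
  exact Complex.abs_arg_le_pi_div_two_iff.2 (le_of_lt (one_sub_re_pos hw hw1))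

lemma zeta_im' {w : ℂ} (hw : ‖w‖ ≤ 1) (hw1 : w ≠ 1) :
    |(-(Complex.log (1 - w))).im| ≤ Real.pi :=
  le_trans (zeta_im hw hw1) (by linarith [Real.pi_pos])

lemma zeta_im_lt {w : ℂ} (hw : ‖w‖ ≤ 1) (hw1 : w ≠ 1) :
    |(-(Complex.log (1 - w))).im| < Real.pi :=
  lt_of_le_of_lt (zeta_im hw hw1) (by linarith [Real.pi_pos])

lemma zeta_re (w : ℂ) :
    (-(Complex.log (1 - w))).re = -(Real.log (‖1 - w‖)) := by
  rw [Complex.neg_re, Complex.log_re]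

lemma Efun_re (w : ℂ) :
    ((w + 1)/(w - 1)).re = (Complex.normSq w - 1) / Complex.normSq (w - 1) := by
  rw [Complex.div_re, ← add_div]
  congr 1
  simp only [Complex.add_re, Complex.add_im, Complex.sub_re, Complex.sub_im,
    Complex.one_re, Complex.one_im, Complex.normSq_apply]
  ring

lemma abs_Efun (w : ℂ) :
    ‖Efun w‖ = Real.exp ((Complex.normSq w - 1) / Complex.normSq (w - 1)) := by
  rw [Efun, Complex.norm_exp, Efun_re]

lemma abs_Efun_le_one {w : ℂ} (hw : ‖w‖ ≤ 1) : ‖Efun w‖ ≤ 1 := by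
  rw [abs_Efun, Real.exp_le_one_iff]
  apply div_nonpos_of_nonpos_of_nonneg
  · rw [Complex.normSq_eq_norm_sq]; nlinarith [norm_nonneg w]
  · exact Complex.normSq_nonneg _

lemma abs_Efun_eq_one {w : ℂ} (hw : ‖w‖ = 1) : ‖Efun w‖ = 1 := by
  rw [abs_Efun, Complex.normSq_eq_norm_sq, hw]
  norm_num

lemma abs_Qfun_le {w : ℂ} (hw : ‖w‖ ≤ 1) :
    ‖Qfun w‖ ≤ ‖1 - w‖ := by
  rw [Qfun]
  split_ifs with h
  · simp
  · rw [norm_mul]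
    calc ‖1 - w‖ * ‖Efun w‖ ≤ ‖1 - w‖ * 1 :=
      mul_le_mul_of_nonneg_left (abs_Efun_le_one hw) (norm_nonneg _)
    _ = _ := mul_one _

lemma norm_hone_le {x : ℕ → ℝ} {w : ℂ} (hw : ‖w‖ ≤ 1) (hw1 : w ≠ 1) :
    ‖hone x w‖ ≤ Sfun x (-(Real.log (‖1 - w‖))) := by
  rw [hone, if_neg hw1, ← zeta_re]
  exact norm_gfun_le (zeta_im' hw hw1)

lemma norm_Rone_le {x : ℕ → ℝ} {w : ℂ} (hw : ‖w‖ ≤ 1) (hw1 : w ≠ 1) :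
    ‖Rone x w‖ ≤ Sfun x (-(Real.log (‖1 - w‖))) := by
  rw [Rone, if_neg hw1, norm_mul, ← zeta_re]
  calc ‖Efun w‖ * ‖gfun x (-(Complex.log (1 - w)))‖
      ≤ 1 * ‖gfun x (-(Complex.log (1 - w)))‖ :=
        mul_le_mul_of_nonneg_right (abs_Efun_le_one hw) (norm_nonneg _)
    _ = _ := one_mul _
    _ ≤ _ := norm_gfun_le (zeta_im' hw hw1)


lemma eventually_ne_one {w : ℂ} (hw1 : w ≠ 1) : ∀ᶠ y in nhds w, y ≠ (1:ℂ) :=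
  eventually_ne_nhds hw1

lemma continuousAt_formula_aux {x : ℕ → ℝ} {w : ℂ} (hre : w.re < 1) :
    ContinuousAt (fun y => gfun x (-(Complex.log (1 - y)))) w := by
  have h1 : (1 - w) ∈ Complex.slitPlane := by
    apply Complex.mem_slitPlane_iff.2 (Or.inl ?_)
    simp only [Complex.sub_re, Complex.one_re]; linarith
  have hlog : ContinuousAt (fun y : ℂ => -(Complex.log (1 - y))) w := by
    apply ContinuousAt.neg
    exact (_root_.continuousAt_clog h1).comp ((continuous_const.sub continuous_id).continuousAt)
  apply ContinuousAt.comp (g := gfun x) ?_ hlog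
  apply gfun_continuousAt
  rw [Complex.neg_im, abs_neg, Complex.log_im]
  calc |(1 - w).arg| ≤ Real.pi / 2 := by
        apply Complex.abs_arg_le_pi_div_two_iff.2
        simp only [Complex.sub_re, Complex.one_re]; linarith
    _ < Real.pi := by linarith [Real.pi_pos]

lemma continuousAt_hone {x : ℕ → ℝ} {w : ℂ} (hre : w.re < 1) :
    ContinuousAt (hone x) w := by
  have hne : w ≠ 1 := by intro h; rw [h] at hre; simp at hre
  apply ContinuousAt.congr (continuousAt_formula_aux hre)
  filter_upwards [eventually_ne_one hne] with y hy
  rw [hone, if_neg hy]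

lemma continuousAt_Rone {x : ℕ → ℝ} {w : ℂ} (hre : w.re < 1) :
    ContinuousAt (Rone x) w := by
  have hne : w ≠ 1 := by intro h; rw [h] at hre; simp at hre
  have hE : ContinuousAt Efun w := by
    apply Complex.continuous_exp.continuousAt.comp
    exact ContinuousAt.div (by fun_prop) (by fun_prop) (sub_ne_zero.2 hne)
  apply ContinuousAt.congr (hE.mul (continuousAt_formula_aux (x := x) hre))
  filter_upwards [eventually_ne_one hne] with y hy
  rw [Rone, if_neg hy]; rfl

lemma continuousAt_Qfun {w : ℂ} (hne : w ≠ 1) : ContinuousAt Qfun w := by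
  have hE : ContinuousAt Efun w := by
    apply Complex.continuous_exp.continuousAt.comp
    exact ContinuousAt.div (by fun_prop) (by fun_prop) (sub_ne_zero.2 hne)
  apply ContinuousAt.congr ((by fun_prop : ContinuousAt (fun y : ℂ => 1 - y) w).mul hE)
  filter_upwards [eventually_ne_one hne] with y hy
  rw [Qfun, if_neg hy]; rfl

/-- tendsto-to-∞ of `-log |1-w|` as `w → 1` within the punctured disc -/
lemma tendsto_negloga :
    Tendsto (fun w : ℂ => -(Real.log (‖1 - w‖))) (nhdsWithin 1 (cdisc \ {1}))
      atTop := by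
  rw [Filter.tendsto_neg_atTop_iff]
  apply Real.tendsto_log_nhdsGT_zero.comp
  rw [tendsto_nhdsWithin_iff]
  constructor
  · have : Continuous (fun w : ℂ => ‖1 - w‖) := continuous_norm.comp (continuous_const.sub continuous_id)
    have h2 := (this.tendsto (1:ℂ)).mono_left (nhdsWithin_le_nhds (s := cdisc \ {1}))
    simpa using h2
  · filter_upwards [self_mem_nhdsWithin] with w hw
    simp only [Set.mem_Ioi]
    rw [norm_pos_iff]
    intro h
    apply hw.2
    have h2 : (1:ℂ) - w = 0 := h
    have h3 : w = 1 := by linear_combination -h2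
    simp [h3]

lemma continuousWithinAt_of_bound {f : ℂ → ℂ} {x : ℕ → ℝ}
    (hf1 : f 1 = 0)
    (hb : ∀ w ∈ cdisc \ {1}, ‖f w‖ ≤ Sfun x (-(Real.log (‖1 - w‖)))) :
    ContinuousWithinAt f cdisc 1 := by
  rw [ContinuousWithinAt, hf1]
  have hsub : cdisc ⊆ (cdisc \ {1}) ∪ {1} := by
    intro w hw; by_cases h : w = 1
    · exact Or.inr (by simp [h])
    · exact Or.inl ⟨hw, h⟩
  apply Filter.Tendsto.mono_left ?_ (nhdsWithin_mono 1 hsub)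
  rw [nhdsWithin_union, Filter.tendsto_sup]
  constructor
  · apply squeeze_zero_norm' ?_ ((Sfun_tendsto x).comp tendsto_negloga)
    filter_upwards [self_mem_nhdsWithin] with w hw
    exact hb w hw
  · rw [nhdsWithin_singleton]
    have := tendsto_pure_nhds f 1
    rwa [hf1] at this

lemma continuousOn_hone (x : ℕ → ℝ) : ContinuousOn (hone x) cdisc := by
  intro w hw
  by_cases h : w = 1
  · subst h
    exact continuousWithinAt_of_bound (by simp [hone])
      (fun w hw => norm_hone_le hw.1 hw.2)
  · exact (continuousAt_hone (re_lt_one hw h)).continuousWithinAt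

lemma continuousOn_Rone (x : ℕ → ℝ) : ContinuousOn (Rone x) cdisc := by
  intro w hw
  by_cases h : w = 1
  · subst h
    exact continuousWithinAt_of_bound (by simp [Rone])
      (fun w hw => norm_Rone_le hw.1 hw.2)
  · exact (continuousAt_Rone (re_lt_one hw h)).continuousWithinAt

lemma continuousOn_Qfun : ContinuousOn Qfun cdisc := by
  intro w hw
  by_cases h : w = 1
  · subst h
    rw [ContinuousWithinAt, show Qfun 1 = 0 by simp [Qfun]]
    apply squeeze_zero_norm' (a := fun w : ℂ => ‖1 - w‖)
    · filter_upwards [self_mem_nhdsWithin] with y hy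
      exact abs_Qfun_le hy
    · have : Continuous (fun w : ℂ => ‖1 - w‖) := continuous_norm.comp (continuous_const.sub continuous_id)
      have h2 := (this.tendsto (1:ℂ)).mono_left (nhdsWithin_le_nhds (s := cdisc))
      simpa using h2
  · exact (continuousAt_Qfun h).continuousWithinAt

/-! ### differentiability on the open disc -/

lemma differentiableAt_Qfun {w : ℂ} (hne : w ≠ 1) : DifferentiableAt ℂ Qfun w := by
  have hE : DifferentiableAt ℂ Efun w := by
    apply Complex.differentiable_exp.differentiableAt.comp
    exact DifferentiableAt.div (by fun_prop) (by fun_prop) (sub_ne_zero.2 hne)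
  apply DifferentiableAt.congr_of_eventuallyEq ((differentiableAt_const (1:ℂ)).sub
    differentiableAt_fun_id |>.mul hE)
  filter_upwards [eventually_ne_one hne] with y hy
  rw [Qfun, if_neg hy]; rfl

lemma differentiableAt_formula_aux {x : ℕ → ℝ} {w : ℂ} (hre : w.re < 1) :
    DifferentiableAt ℂ (fun y => gfun x (-(Complex.log (1 - y)))) w := by
  have h1 : (1 - w) ∈ Complex.slitPlane := by
    apply Complex.mem_slitPlane_iff.2 (Or.inl ?_)
    simp only [Complex.sub_re, Complex.one_re]; linarith
  have hlog : DifferentiableAt ℂ (fun y : ℂ => -(Complex.log (1 - y))) w := by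
    apply DifferentiableAt.neg
    exact (Complex.differentiableAt_log h1).comp w (by fun_prop)
  apply DifferentiableAt.comp (g := gfun x) w ?_ hlog
  · apply (gfun_differentiableOn x).differentiableAt
    apply isOpen_strip.mem_nhds
    rw [strip, Set.mem_setOf_eq, Complex.neg_im, abs_neg, Complex.log_im]
    calc |(1 - w).arg| ≤ Real.pi / 2 := by
          apply Complex.abs_arg_le_pi_div_two_iff.2
          simp only [Complex.sub_re, Complex.one_re]; linarith
      _ < Real.pi := by linarith [Real.pi_pos]

lemma differentiableAt_hone {x : ℕ → ℝ} {w : ℂ} (hre : w.re < 1) :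
    DifferentiableAt ℂ (hone x) w := by
  have hne : w ≠ 1 := by intro h; rw [h] at hre; simp at hre
  apply DifferentiableAt.congr_of_eventuallyEq (differentiableAt_formula_aux hre)
  filter_upwards [eventually_ne_one hne] with y hy
  rw [hone, if_neg hy]

lemma differentiableAt_Rone {x : ℕ → ℝ} {w : ℂ} (hre : w.re < 1) :
    DifferentiableAt ℂ (Rone x) w := by
  have hne : w ≠ 1 := by intro h; rw [h] at hre; simp at hre
  have hE : DifferentiableAt ℂ Efun w := by
    apply Complex.differentiable_exp.differentiableAt.comp
    exact DifferentiableAt.div (by fun_prop) (by fun_prop) (sub_ne_zero.2 hne)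
  apply DifferentiableAt.congr_of_eventuallyEq (hE.mul (differentiableAt_formula_aux (x := x) hre))
  filter_upwards [eventually_ne_one hne] with y hy
  rw [Rone, if_neg hy]; rfl


/-! ### radial limit of `Efun` -/

lemma abs_Efun_real (r : ℝ) : ‖Efun (r:ℂ)‖ = Real.exp ((r^2 - 1)/(r - 1)^2) := by
  rw [abs_Efun]
  congr 1
  have h1 : ((r:ℂ) - 1) = ((r - 1 : ℝ) : ℂ) := by push_cast; ring
  rw [h1, Complex.normSq_ofReal, Complex.normSq_ofReal]
  ring

lemma tendsto_exponent_radial :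
    Tendsto (fun r : ℝ => (r^2 - 1)/(r - 1)^2) (nhdsWithin 1 (Set.Iio 1)) atBot := by
  have hev : ∀ r ∈ Set.Iio (1:ℝ), (r^2 - 1)/(r - 1)^2 = -((1 + r) * (1 - r)⁻¹) := by
    intro r hr
    have h1 : r - 1 ≠ 0 := by simp only [Set.mem_Iio] at hr; intro h; linarith [sub_eq_zero.1 h]
    have h2 : (1:ℝ) - r ≠ 0 := by intro h; exact h1 (by linarith [sub_eq_zero.1 h])
    field_simp
    ring
  apply Filter.Tendsto.congr' (Filter.eventuallyEq_of_mem self_mem_nhdsWithin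
    (fun r hr => (hev r hr).symm))
  rw [Filter.tendsto_neg_atBot_iff]
  apply Filter.Tendsto.pos_mul_atTop (two_pos)
  · have h4 : Continuous (fun r : ℝ => 1 + r) := continuous_const.add continuous_id
    have h3 := h4.tendsto (1:ℝ)
    norm_num at h3
    exact h3.mono_left nhdsWithin_le_nhds
  · apply tendsto_inv_nhdsGT_zero.comp
    rw [tendsto_nhdsWithin_iff]
    constructor
    · have h4 : Continuous (fun r : ℝ => 1 - r) := continuous_const.sub continuous_id
      have h5 := h4.tendsto (1:ℝ)
      norm_num at h5
      exact h5.mono_left nhdsWithin_le_nhds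
    · filter_upwards [self_mem_nhdsWithin] with r hr
      simp only [Set.mem_Iio] at hr
      simp only [Set.mem_Ioi]
      linarith

lemma tendsto_Efun_radial :
    Tendsto (fun r : ℝ => Efun (r:ℂ)) (nhdsWithin 1 (Set.Iio 1)) (nhds 0) := by
  apply squeeze_zero_norm (fun r => le_of_eq (abs_Efun_real r))
  exact Real.tendsto_exp_atBot.comp tendsto_exponent_radial

/-! ### value of `hone` at the radial points -/

lemma hone_radial (x : ℕ → ℝ) (j : ℕ) :
    hone x ((1 - Real.exp (-(x j)) : ℝ) : ℂ) = gfun x ((x j : ℝ) : ℂ) := by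
  have hne : ((1 - Real.exp (-(x j)) : ℝ) : ℂ) ≠ 1 := by
    intro h
    have h2 : (1 - Real.exp (-(x j)) : ℝ) = 1 := by exact_mod_cast h
    have := Real.exp_pos (-(x j))
    linarith
  rw [hone, if_neg hne]
  congr 1
  have h1 : (1:ℂ) - ((1 - Real.exp (-(x j)) : ℝ) : ℂ) = ((Real.exp (-(x j)) : ℝ) : ℂ) := by
    push_cast; ring
  rw [h1, ← Complex.ofReal_log (le_of_lt (Real.exp_pos _)), Real.log_exp]
  push_cast
  ring


/-! ### the polydisk -/

section Poly

variable {n : ℕ}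

lemma isClosed_poly : IsClosed (closedUnitPolydisk n) := by
  have h : closedUnitPolydisk n = ⋂ j, {z : Fin n → ℂ | ‖z j‖ ≤ 1} := by
    ext z; simp [closedUnitPolydisk, Set.mem_iInter]
  rw [h]
  exact isClosed_iInter (fun j => isClosed_le
    (continuous_norm.comp (continuous_apply j)) continuous_const)

lemma isCompact_poly : IsCompact (closedUnitPolydisk n) := by
  apply Metric.isCompact_of_isClosed_isBounded isClosed_poly
  apply Bornology.IsBounded.subset (Metric.isBounded_closedBall (x := (0 : Fin n → ℂ)) (r := 1))
  intro z hz
  rw [Metric.mem_closedBall, dist_zero_right]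
  apply (pi_norm_le_iff_of_nonneg zero_le_one).2
  intro j
  exact_mod_cast hz j

lemma abs_lt_one_of_interior (i : Fin n) {z : Fin n → ℂ}
    (hz : z ∈ interior (closedUnitPolydisk n)) : ‖z i‖ < 1 := by
  by_contra hcon
  push_neg at hcon
  have hz1 : ‖z i‖ = 1 := le_antisymm (interior_subset hz i) hcon
  obtain ⟨ε, hε, hball⟩ := Metric.mem_nhds_iff.1 (mem_interior_iff_mem_nhds.1 hz)
  have hεl : min (ε/2) (1/2) > 0 := by positivity
  set c : ℝ := min (ε/2) (1/2) with hc
  set z' := Function.update z i (((1 + c : ℝ) : ℂ) * z i) with hz'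
  have hmem : z' ∈ Metric.ball z ε := by
    rw [Metric.mem_ball, dist_pi_lt_iff hε]
    intro j
    by_cases hj : j = i
    · subst hj
      rw [hz', Function.update_self, Complex.dist_eq]
      have h2 : ((1 + c : ℝ) : ℂ) * z j - z j = ((c:ℝ):ℂ) * z j := by push_cast; ring
      rw [h2, norm_mul, hz1, mul_one, Complex.norm_real, Real.norm_eq_abs]
      rw [abs_of_pos hεl]
      calc c ≤ ε/2 := min_le_left _ _
        _ < ε := by linarith
    · rw [hz', Function.update_of_ne hj]
      simpa using hε
  have h3 := hball hmem i
  rw [hz', Function.update_self, norm_mul, hz1, mul_one, Complex.norm_real, Real.norm_eq_abs] at h3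
  rw [abs_of_pos (by linarith : (0:ℝ) < 1 + c)] at h3
  linarith

lemma abs_lt_one_ne_one {w : ℂ} (hw : ‖w‖ < 1) : w ≠ 1 := by
  intro h; rw [h] at hw; simp at hw

def cpath (i : Fin n) (w : ℂ) : Fin n → ℂ := fun j => if j = i then w else 0

lemma cpath_mem (i : Fin n) {w : ℂ} (hw : ‖w‖ ≤ 1) :
    cpath i w ∈ closedUnitPolydisk n := by
  intro j
  by_cases hj : j = i <;> simp [cpath, hj, hw]

lemma cpath_apply (i : Fin n) (w : ℂ) : cpath i w i = w := if_pos rfl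

lemma continuous_cpath (i : Fin n) : Continuous (cpath i) := by
  apply continuous_pi
  intro j
  by_cases hj : j = i <;> simp [cpath, hj]
  · exact continuous_id
  · exact continuous_const

end Poly


/-! ### lifting one-variable functions to the polydisk algebra -/

section Lift

variable {n : ℕ}

lemma mem_diskAlgebraOf_iff {K : Set (Fin n → ℂ)} {f : C(K, ℂ)} :
    f ∈ diskAlgebraOf K ↔ DifferentiableOn ℂ (extendByZero f) (interior K) :=
  Iff.rfl

def liftCM (i : Fin n) (F : ℂ → ℂ) (hF : ContinuousOn F cdisc) :
    C(closedUnitPolydisk n, ℂ) :=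
  ⟨fun z => F (z.1 i),
    hF.comp_continuous ((continuous_apply i).comp continuous_subtype_val) (fun z => z.2 i)⟩

lemma liftCM_mem (i : Fin n) (F : ℂ → ℂ) (hF : ContinuousOn F cdisc)
    (hd : ∀ w : ℂ, ‖w‖ < 1 → DifferentiableAt ℂ F w) :
    liftCM i F hF ∈ diskAlgebraOf (closedUnitPolydisk n) := by
  rw [mem_diskAlgebraOf_iff]
  apply DifferentiableOn.congr (f := fun z : Fin n → ℂ => F (z i))
  · intro z hz
    have h1 : DifferentiableAt ℂ (fun z : Fin n → ℂ => z i) z :=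
      (ContinuousLinearMap.proj (R := ℂ) (φ := fun _ : Fin n => ℂ) i).differentiableAt
    exact ((hd (z i) (abs_lt_one_of_interior i hz)).comp z h1).differentiableWithinAt
  · intro z hz
    simp [extendByZero, dif_pos (interior_subset hz), liftCM]

def liftA (i : Fin n) (F : ℂ → ℂ) (hF : ContinuousOn F cdisc)
    (hd : ∀ w : ℂ, ‖w‖ < 1 → DifferentiableAt ℂ F w) :
    ↥(diskAlgebraOf (closedUnitPolydisk n)) :=
  ⟨liftCM i F hF, liftCM_mem i F hF hd⟩

/-- evaluation of an algebra element on the ambient space (0 outside `K`) -/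
def evx (e : ↥(diskAlgebraOf (closedUnitPolydisk n))) : (Fin n → ℂ) → ℂ :=
  extendByZero (e : C(closedUnitPolydisk n, ℂ))

lemma evx_apply (e : ↥(diskAlgebraOf (closedUnitPolydisk n))) {z : Fin n → ℂ}
    (hz : z ∈ closedUnitPolydisk n) :
    evx e z = (e : C(closedUnitPolydisk n, ℂ)) ⟨z, hz⟩ := dif_pos hz

lemma evx_liftA (i : Fin n) (F : ℂ → ℂ) (hF) (hd) {z : Fin n → ℂ}
    (hz : z ∈ closedUnitPolydisk n) : evx (liftA i F hF hd) z = F (z i) := by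
  rw [evx_apply _ hz]; rfl

lemma evx_mul (e₁ e₂ : ↥(diskAlgebraOf (closedUnitPolydisk n))) {z : Fin n → ℂ}
    (hz : z ∈ closedUnitPolydisk n) :
    evx (e₁ * e₂) z = evx e₁ z * evx e₂ z := by
  rw [evx_apply _ hz, evx_apply _ hz, evx_apply _ hz]
  rfl

lemma evx_continuousOn (e : ↥(diskAlgebraOf (closedUnitPolydisk n))) :
    ContinuousOn (evx e) (closedUnitPolydisk n) := by
  rw [continuousOn_iff_continuous_restrict]
  have h : (closedUnitPolydisk n).restrict (evx e) = (e : C(closedUnitPolydisk n, ℂ)) := by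
    funext z
    exact dif_pos z.2
  rw [show (closedUnitPolydisk n).domRestrict (evx e) = _ from h]
  exact (e : C(closedUnitPolydisk n, ℂ)).continuous

/-! ### limits along the radial and circular paths -/

lemma tendsto_cpath_radial (i : Fin n) :
    Tendsto (fun r : ℝ => cpath i ((r : ℝ) : ℂ)) (nhdsWithin 1 (Set.Iio 1))
      (nhdsWithin (cpath i 1) (closedUnitPolydisk n)) := by
  rw [tendsto_nhdsWithin_iff]
  constructor
  · have h1 : Continuous (fun r : ℝ => cpath i ((r : ℝ) : ℂ)) :=
      (continuous_cpath i).comp Complex.continuous_ofReal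
    have h2 := h1.tendsto (1:ℝ)
    simp only [Complex.ofReal_one] at h2
    exact h2.mono_left nhdsWithin_le_nhds
  · filter_upwards [Ioo_mem_nhdsLT_of_mem (by norm_num : (1:ℝ) ∈ Set.Ioc (-1) 1)] with r hr
    apply cpath_mem
    rw [Complex.norm_real, Real.norm_eq_abs, abs_le]
    exact ⟨le_of_lt hr.1, le_of_lt hr.2⟩

lemma tendsto_evx_radial (i : Fin n) (e : ↥(diskAlgebraOf (closedUnitPolydisk n))) :
    Tendsto (fun r : ℝ => evx e (cpath i ((r : ℝ) : ℂ))) (nhdsWithin 1 (Set.Iio 1))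
      (nhds (evx e (cpath i 1))) := by
  have h1 : ContinuousWithinAt (evx e) (closedUnitPolydisk n) (cpath i 1) :=
    evx_continuousOn e _ (cpath_mem i (by simp))
  exact h1.tendsto.comp (tendsto_cpath_radial i)

lemma tendsto_cpath_circ (i : Fin n) :
    Tendsto (fun t : ℝ => cpath i (Complex.exp ((t:ℂ) * Complex.I)))
      (nhdsWithin 0 (Set.Ioi 0)) (nhdsWithin (cpath i 1) (closedUnitPolydisk n)) := by
  rw [tendsto_nhdsWithin_iff]
  constructor
  · have h1 : Continuous (fun t : ℝ => cpath i (Complex.exp ((t:ℂ) * Complex.I))) := by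
      apply (continuous_cpath i).comp
      exact Complex.continuous_exp.comp (by fun_prop)
    have h2 := h1.tendsto (0:ℝ)
    simp only [Complex.ofReal_zero, zero_mul, Complex.exp_zero] at h2
    exact h2.mono_left nhdsWithin_le_nhds
  · filter_upwards [self_mem_nhdsWithin] with t _
    exact cpath_mem i (le_of_eq (Complex.norm_exp_ofReal_mul_I t))

lemma tendsto_evx_circ (i : Fin n) (e : ↥(diskAlgebraOf (closedUnitPolydisk n))) :
    Tendsto (fun t : ℝ => evx e (cpath i (Complex.exp ((t:ℂ) * Complex.I))))
      (nhdsWithin 0 (Set.Ioi 0)) (nhds (evx e (cpath i 1))) := by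
  have h1 : ContinuousWithinAt (evx e) (closedUnitPolydisk n) (cpath i 1) :=
    evx_continuousOn e _ (cpath_mem i (by simp))
  exact h1.tendsto.comp (tendsto_cpath_circ i)

lemma exp_mul_I_ne_one {t : ℝ} (h0 : 0 < t) (h1 : t < 1) :
    Complex.exp ((t:ℂ) * Complex.I) ≠ 1 := by
  intro h
  obtain ⟨k, hk⟩ := Complex.exp_eq_one_iff.1 h
  have h' : (t:ℂ) * Complex.I = ((k:ℂ) * (2 * (Real.pi:ℂ))) * Complex.I := by rw [hk]; ring
  have ht : (t:ℂ) = (k:ℂ) * (2 * (Real.pi:ℂ)) := mul_right_cancel₀ Complex.I_ne_zero h'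
  have ht2 : t = (k:ℝ) * (2 * Real.pi) := by exact_mod_cast ht
  rcases lt_trichotomy k 0 with hneg | hzero | hpos
  · have hk1 : (k:ℝ) ≤ -1 := by exact_mod_cast (by omega : k ≤ -1)
    nlinarith [Real.pi_gt_three]
  · rw [hzero] at ht2; simp at ht2; linarith
  · have hk1 : (1:ℝ) ≤ (k:ℝ) := by exact_mod_cast (by omega : 1 ≤ k)
    nlinarith [Real.pi_gt_three]

end Lift


/-! ### the key vanishing lemma -/

section Main

variable {n : ℕ}

lemma key_vanish (i : Fin n) (a bb : ↥(diskAlgebraOf (closedUnitPolydisk n)))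
    (h : ∀ z ∈ closedUnitPolydisk n, evx a z * (1 - z i) = evx bb z * Qfun (z i)) :
    evx bb (cpath i 1) = 0 := by
  have hpt : ∀ z ∈ closedUnitPolydisk n, z i ≠ 1 → evx a z = evx bb z * Efun (z i) := by
    intro z hz hne
    have h2 := h z hz
    rw [Qfun, if_neg hne] at h2
    have h3 : (1 : ℂ) - z i ≠ 0 := sub_ne_zero.2 (Ne.symm hne)
    apply mul_right_cancel₀ h3
    rw [h2]; ring
  have ha0 : evx a (cpath i 1) = 0 := by
    have hev : ∀ᶠ r in nhdsWithin 1 (Set.Iio 1),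
        evx a (cpath i ((r:ℝ):ℂ)) = evx bb (cpath i ((r:ℝ):ℂ)) * Efun ((r:ℝ):ℂ) := by
      filter_upwards [Ioo_mem_nhdsLT_of_mem (by norm_num : (1:ℝ) ∈ Set.Ioc (0:ℝ) 1)] with r hr
      have hmem : cpath i ((r:ℝ):ℂ) ∈ closedUnitPolydisk n := by
        apply cpath_mem
        rw [Complex.norm_real, Real.norm_eq_abs, abs_le]
        exact ⟨by linarith [hr.1], le_of_lt hr.2⟩
      have hne : ((r:ℝ):ℂ) ≠ 1 := by
        intro hcon
        have : r = 1 := by exact_mod_cast hcon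
        linarith [hr.2]
      have h4 := hpt _ hmem (by rw [cpath_apply]; exact hne)
      rwa [cpath_apply] at h4
    have h1 := tendsto_evx_radial i a
    have h2 : Tendsto (fun r : ℝ => evx bb (cpath i ((r:ℝ):ℂ)) * Efun ((r:ℝ):ℂ))
        (nhdsWithin 1 (Set.Iio 1)) (nhds (evx bb (cpath i 1) * 0)) :=
      (tendsto_evx_radial i bb).mul tendsto_Efun_radial
    rw [mul_zero] at h2
    exact tendsto_nhds_unique (h1.congr' hev) h2
  have hnorm : ‖evx bb (cpath i 1)‖ = ‖evx a (cpath i 1)‖ := by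
    have hev : ∀ᶠ t in nhdsWithin (0:ℝ) (Set.Ioi (0:ℝ)),
        ‖evx a (cpath i (Complex.exp (((t:ℝ):ℂ) * Complex.I)))‖ =
        ‖evx bb (cpath i (Complex.exp (((t:ℝ):ℂ) * Complex.I)))‖ := by
      filter_upwards [Ioo_mem_nhdsGT_of_mem (by norm_num : (0:ℝ) ∈ Set.Ico (0:ℝ) 1)] with t ht
      have habs : ‖Complex.exp ((t:ℂ) * Complex.I)‖ = 1 :=
        Complex.norm_exp_ofReal_mul_I t
      have hne : Complex.exp ((t:ℂ) * Complex.I) ≠ 1 := exp_mul_I_ne_one ht.1 ht.2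
      have hmem := cpath_mem i (le_of_eq habs)
      have h4 := hpt _ hmem (by rw [cpath_apply]; exact hne)
      rw [cpath_apply] at h4
      rw [h4, norm_mul]
      rw [show ‖Efun (Complex.exp ((t:ℂ) * Complex.I))‖ = 1 from abs_Efun_eq_one habs, mul_one]
    have h1 := (tendsto_evx_circ i a).norm
    have h2 := (tendsto_evx_circ i bb).norm
    exact (tendsto_nhds_unique (h1.congr' hev) h2).symm
  rw [ha0, norm_zero, norm_eq_zero] at hnorm
  exact hnorm

end Main


/-! ### assembling the main theorem -/

section Assemble

variable {n : ℕ}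

noncomputable def fE (i : Fin n) : ↥(diskAlgebraOf (closedUnitPolydisk n)) :=
  liftA i (fun w => 1 - w) ((continuous_const.sub continuous_id).continuousOn)
    (fun w _ => (differentiableAt_const _).sub differentiableAt_fun_id)

noncomputable def qE (i : Fin n) : ↥(diskAlgebraOf (closedUnitPolydisk n)) :=
  liftA i Qfun continuousOn_Qfun (fun w hw => differentiableAt_Qfun (abs_lt_one_ne_one hw))

noncomputable def HE (i : Fin n) (x : ℕ → ℝ) : ↥(diskAlgebraOf (closedUnitPolydisk n)) :=
  liftA i (hone x) (continuousOn_hone x)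
    (fun w hw => differentiableAt_hone (lt_of_le_of_lt (Complex.re_le_norm w) hw))

noncomputable def WE (i : Fin n) (x : ℕ → ℝ) : ↥(diskAlgebraOf (closedUnitPolydisk n)) :=
  liftA i (Rone x) (continuousOn_Rone x)
    (fun w hw => differentiableAt_Rone (lt_of_le_of_lt (Complex.re_le_norm w) hw))

lemma evx_fE (i : Fin n) {z : Fin n → ℂ} (hz : z ∈ closedUnitPolydisk n) :
    evx (fE i) z = 1 - z i := evx_liftA i _ _ _ hz

lemma evx_qE (i : Fin n) {z : Fin n → ℂ} (hz : z ∈ closedUnitPolydisk n) :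
    evx (qE i) z = Qfun (z i) := evx_liftA i _ _ _ hz

lemma evx_HE (i : Fin n) (x : ℕ → ℝ) {z : Fin n → ℂ} (hz : z ∈ closedUnitPolydisk n) :
    evx (HE i x) z = hone x (z i) := evx_liftA i _ _ _ hz

lemma evx_WE (i : Fin n) (x : ℕ → ℝ) {z : Fin n → ℂ} (hz : z ∈ closedUnitPolydisk n) :
    evx (WE i x) z = Rone x (z i) := evx_liftA i _ _ _ hz

lemma WE_mul_fE (i : Fin n) (x : ℕ → ℝ) : WE i x * fE i = HE i x * qE i := by
  apply Subtype.ext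
  apply ContinuousMap.ext
  intro z
  show Rone x (z.1 i) * (1 - z.1 i) = hone x (z.1 i) * Qfun (z.1 i)
  by_cases h : z.1 i = 1
  · rw [h, Rone, hone, Qfun, if_pos rfl, if_pos rfl, if_pos rfl]
    ring
  · rw [Rone, hone, Qfun, if_neg h, if_neg h, if_neg h]
    ring

end Assemble


end NC


open NC in
/-- For every `n ≥ 1` the polydisk algebra `A(D̄ⁿ)` is not coherent: there exist two
finitely generated ideals whose intersection is not finitely generated. -/
theorem noncoherent_stmt6 (n : ℕ) (hn : 1 ≤ n) :
    ∃ I J : Ideal ↥(diskAlgebraOf (closedUnitPolydisk n)),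
      I.FG ∧ J.FG ∧ ¬ (I ⊓ J).FG := by

  classical
  set i : Fin n := ⟨0, hn⟩
  refine ⟨Ideal.span {fE i}, Ideal.span {qE i}, ⟨{fE i}, by simp⟩, ⟨{qE i}, by simp⟩, ?_⟩
  rintro ⟨T, hT⟩
  haveI : CompactSpace ↥(closedUnitPolydisk n) := isCompact_iff_compactSpace.1 isCompact_poly
  -- choose factorizations of the generators through `qE` with vanishing cofactor
  have hbT : ∀ t ∈ T, ∃ bb, bb * qE i = t ∧ evx bb (cpath i 1) = 0 := by
    intro t ht
    have htIJ : t ∈ Ideal.span {fE i} ⊓ Ideal.span {qE i} := by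
      rw [← hT]
      exact Ideal.subset_span (Finset.mem_coe.2 ht)
    obtain ⟨hI, hJ⟩ := Submodule.mem_inf.1 htIJ
    obtain ⟨a, ha⟩ := Ideal.mem_span_singleton'.1 hI
    obtain ⟨bb, hb⟩ := Ideal.mem_span_singleton'.1 hJ
    refine ⟨bb, hb, key_vanish i a bb ?_⟩
    intro z hz
    have h1 : evx (a * fE i) z = evx (bb * qE i) z := by rw [ha, hb]
    rw [evx_mul _ _ hz, evx_mul _ _ hz, evx_fE i hz, evx_qE i hz] at h1
    exact h1
  choose! b hbq hb0 using hbT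
  -- the decay function
  set u : ℝ → ℝ := fun r => ∑ t ∈ T, ‖evx (b t) (cpath i ((r:ℝ):ℂ))‖ with hu_def
  have hu : Tendsto u (nhdsWithin 1 (Set.Iio 1)) (nhds 0) := by
    rw [show (0:ℝ) = ∑ t ∈ T, (0:ℝ) by simp]
    apply tendsto_finset_sum
    intro t ht
    have h1 := (tendsto_evx_radial i (b t)).norm
    rw [hb0 t ht, norm_zero] at h1
    exact h1
  have hδ : ∀ j : ℕ, ∃ δ : ℝ, 0 < δ ∧ ∀ r : ℝ, 1 - δ < r → r < 1 → u r < (1/4:ℝ)^j := by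
    intro j
    have hpos : (0:ℝ) < (1/4:ℝ)^j := by positivity
    have hev : ∀ᶠ r in nhdsWithin (1:ℝ) (Set.Iio 1), u r < (1/4:ℝ)^j :=
      hu.eventually (gt_mem_nhds hpos)
    rw [eventually_nhdsWithin_iff] at hev
    obtain ⟨ε, hε, hball⟩ := Metric.eventually_nhds_iff.1 hev
    refine ⟨ε, hε, fun r h1 h2 => ?_⟩
    apply hball ?_ h2
    rw [Real.dist_eq, abs_sub_lt_iff]
    constructor <;> linarith
  choose δ hδpos hδu using hδ
  set x : ℕ → ℝ := fun j => max (j:ℝ) (1 - Real.log (δ j)) with hx_def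
  set rr : ℕ → ℝ := fun j => 1 - Real.exp (-(x j)) with hrr_def
  have hrr1 : ∀ j, rr j < 1 := fun j => by
    have := Real.exp_pos (-(x j)); simp only [hrr_def]; linarith
  have hrr0 : ∀ j, 0 ≤ rr j := fun j => by
    have hxj : 0 ≤ x j := le_trans (Nat.cast_nonneg j) (le_max_left _ _)
    have : Real.exp (-(x j)) ≤ 1 := Real.exp_le_one_iff.2 (by linarith)
    simp only [hrr_def]; linarith
  have hrru : ∀ j, u (rr j) < (1/4:ℝ)^j := by
    intro j
    apply hδu j _ ?_ (hrr1 j)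
    have h1 : Real.exp (-(x j)) < δ j := by
      have h2 : -(x j) ≤ Real.log (δ j) - 1 := by
        have := le_max_right (j:ℝ) (1 - Real.log (δ j))
        simp only [hx_def]
        have h3 : 1 - Real.log (δ j) ≤ x j := le_max_right _ _
        linarith
      calc Real.exp (-(x j)) ≤ Real.exp (Real.log (δ j) - 1) := Real.exp_le_exp.2 h2
        _ = δ j * Real.exp (-1) := by rw [Real.exp_sub, Real.exp_log (hδpos j), Real.exp_neg]; ring
        _ < δ j * 1 := by
            apply mul_lt_mul_of_pos_left ?_ (hδpos j)
            rw [Real.exp_lt_one_iff]; norm_num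
        _ = δ j := mul_one _
    simp only [hrr_def]
    linarith
  -- the test element
  set G := HE i x * qE i with hG_def
  have hGmem : G ∈ Ideal.span (↑T : Set ↥(diskAlgebraOf (closedUnitPolydisk n))) := by
    rw [hT]
    apply Submodule.mem_inf.2
    constructor
    · exact Ideal.mem_span_singleton'.2 ⟨WE i x, WE_mul_fE i x⟩
    · exact Ideal.mem_span_singleton'.2 ⟨HE i x, rfl⟩
  obtain ⟨c, -, hc⟩ := Submodule.mem_span_finset.1 hGmem
  set M : ℝ := ∑ t ∈ T, ‖((c t : ↥(diskAlgebraOf (closedUnitPolydisk n))) :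
    C(closedUnitPolydisk n, ℂ))‖ with hM_def
  have hM0 : 0 ≤ M := Finset.sum_nonneg (fun t _ => norm_nonneg _)
  obtain ⟨j, hj⟩ := pow_unbounded_of_one_lt M one_lt_two
  -- evaluate everything at the point `cpath i (rr j)`
  have hmem : cpath i ((rr j : ℝ) : ℂ) ∈ closedUnitPolydisk n := by
    apply cpath_mem
    rw [Complex.norm_real, Real.norm_eq_abs, abs_le]
    exact ⟨by linarith [hrr0 j], le_of_lt (hrr1 j)⟩
  set z : Fin n → ℂ := cpath i ((rr j : ℝ) : ℂ) with hz_def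
  have hzi : z i = ((rr j : ℝ) : ℂ) := cpath_apply i _
  have hne1 : ((rr j : ℝ) : ℂ) ≠ 1 := by
    intro hcon
    have : rr j = 1 := by exact_mod_cast hcon
    linarith [hrr1 j]
  -- evaluation of the sum
  have hsum : evx G z = ∑ t ∈ T, evx (c t) z * evx t z := by
    rw [← hc, evx_apply _ hmem]
    have hco : ((∑ t ∈ T, c t • t : ↥(diskAlgebraOf (closedUnitPolydisk n))) :
        C(closedUnitPolydisk n, ℂ)) = ∑ t ∈ T, ((c t • t : ↥(diskAlgebraOf (closedUnitPolydisk n))) :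
        C(closedUnitPolydisk n, ℂ)) := by
      exact AddSubmonoidClass.coe_finset_sum _ _
    rw [hco, ContinuousMap.sum_apply]
    apply Finset.sum_congr rfl
    intro t _
    rw [← evx_apply _ hmem, smul_eq_mul, evx_mul _ _ hmem]
  -- value of G at z
  have hGval : evx G z = hone x ((rr j:ℝ):ℂ) * Qfun ((rr j : ℝ):ℂ) := by
    rw [hG_def, evx_mul _ _ hmem, evx_HE i x hmem, evx_qE i hmem, hzi]
  have htval : ∀ t ∈ T, evx t z = evx (b t) z * Qfun ((rr j:ℝ):ℂ) := by
    intro t ht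
    conv_lhs => rw [← hbq t ht]
    rw [evx_mul _ _ hmem, evx_qE i hmem, hzi]
  have hQne : Qfun ((rr j:ℝ):ℂ) ≠ 0 := by
    rw [Qfun, if_neg hne1]
    exact mul_ne_zero (sub_ne_zero.2 (Ne.symm hne1)) (Complex.exp_ne_zero _)
  have hkey : hone x ((rr j:ℝ):ℂ) = ∑ t ∈ T, evx (c t) z * evx (b t) z := by
    apply mul_right_cancel₀ hQne
    rw [← hGval, hsum, Finset.sum_mul]
    apply Finset.sum_congr rfl
    intro t ht
    rw [htval t ht]; ring
  have hlow : (1/2:ℝ)^j ≤ ‖hone x ((rr j:ℝ):ℂ)‖ := by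
    have h1 : ((rr j : ℝ):ℂ) = ((1 - Real.exp (-(x j)) : ℝ) : ℂ) := by rw [hrr_def]
    rw [h1, hone_radial x j]
    exact gfun_lower x j
  have hup : ‖hone x ((rr j:ℝ):ℂ)‖ ≤ M * u (rr j) := by
    rw [hkey]
    calc ‖∑ t ∈ T, evx (c t) z * evx (b t) z‖
        ≤ ∑ t ∈ T, ‖evx (c t) z * evx (b t) z‖ := norm_sum_le _ _
      _ = ∑ t ∈ T, ‖evx (c t) z‖ * ‖evx (b t) z‖ := by
          apply Finset.sum_congr rfl; intro t _; rw [norm_mul]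
      _ ≤ ∑ t ∈ T, M * ‖evx (b t) z‖ := by
          apply Finset.sum_le_sum
          intro t ht
          apply mul_le_mul_of_nonneg_right ?_ (norm_nonneg _)
          calc ‖evx (c t) z‖
              = ‖(c t : C(closedUnitPolydisk n, ℂ)) ⟨z, hmem⟩‖ := by rw [evx_apply _ hmem]
            _ ≤ ‖(c t : C(closedUnitPolydisk n, ℂ))‖ := ContinuousMap.norm_coe_le_norm _ _
            _ ≤ M := Finset.single_le_sum (f := fun t =>
                  ‖(c t : C(closedUnitPolydisk n, ℂ))‖) (fun t _ => norm_nonneg _) ht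
      _ = M * u (rr j) := by rw [← Finset.mul_sum]
  have hchain : (1/2:ℝ)^j ≤ M * (1/4:ℝ)^j :=
    le_trans hlow (le_trans hup (mul_le_mul_of_nonneg_left (le_of_lt (hrru j)) hM0))
  have h4 : ((1:ℝ)/4)^j * 4^j = 1 := by rw [← mul_pow]; norm_num
  have h5 : ((1:ℝ)/2)^j * 4^j = 2^j := by rw [← mul_pow]; norm_num
  have h2j : (2:ℝ)^j ≤ M := by
    calc (2:ℝ)^j = (1/2:ℝ)^j * 4^j := h5.symm
      _ ≤ (M * (1/4:ℝ)^j) * 4^j := mul_le_mul_of_nonneg_right hchain (by positivity)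
      _ = M * (((1:ℝ)/4)^j * 4^j) := by ring
      _ = M := by rw [h4, mul_one]
  linarith [hj]
end
end

section
/- Let K ⊆ ℂⁿ be a compact set with nonempty interior K°. If z₀ ∈ ∂(K°) is a peak point for the algebra P(cl(K°)) (the uniform closure of the holomorphic polynomials on the closure of K°), then z₀ is a peak point for A(K): there exists g ∈ A(K) with g(z₀) = 1 and |g(z)| < 1 for all z ∈ K, z ≠ z₀. -/
open scoped Classical

/-- The coordinate function `z ↦ zᵢ` as a continuous function on `K`. -/
def coordFn {n : ℕ} (K : Set (Fin n → ℂ)) (i : Fin n) : C(K, ℂ) :=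
  ⟨fun z => (z : Fin n → ℂ) i, (continuous_apply i).comp continuous_subtype_val⟩

/-- `P(K)`: the closure (in the uniform topology of `C(K,ℂ)`, i.e. the
compact-open topology, `K` being compact) of the algebra of restrictions to
`K` of holomorphic polynomials, viewed as a subset of `C(K, ℂ)`. -/
def polyClosure {n : ℕ} (K : Set (Fin n → ℂ)) : Set C(K, ℂ) :=
  closure ((Algebra.adjoin ℂ (Set.range (coordFn K)) : Subalgebra ℂ C(K, ℂ)) :
    Set C(K, ℂ))

open Filter Metric Topology

/-- Cauchy estimate for the Fréchet derivative of an entire function, obtained by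
restricting to complex lines. -/
lemma fderiv_norm_le_of_entire {E : Type*} [NormedAddCommGroup E] [NormedSpace ℂ E]
    {f : E → ℂ} (hf : Differentiable ℂ f) (w : E) {r M : ℝ} (hr : 0 < r) (hM : 0 ≤ M)
    (hbd : ∀ y ∈ Metric.closedBall w r, ‖f y‖ ≤ M) :
    ‖fderiv ℂ f w‖ ≤ M / r := by
  refine ContinuousLinearMap.opNorm_le_bound _ (div_nonneg hM hr.le) fun v => ?_
  rcases eq_or_ne v 0 with rfl | hv
  · simp
  have hv' : 0 < ‖v‖ := norm_pos_iff.mpr hv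
  set ρ : ℝ := r / ‖v‖ with hρdef
  have hρ : 0 < ρ := div_pos hr hv'
  set h : ℂ → ℂ := fun t => f (w + t • v) with hh
  have hline : ∀ t : ℂ, HasDerivAt (fun s : ℂ => w + s • v) v t := fun t => by
    simpa using ((hasDerivAt_id t).smul_const v).const_add w
  have hder : ∀ t : ℂ, HasDerivAt h (fderiv ℂ f (w + t • v) v) t := fun t =>
    ((hf (w + t • v)).hasFDerivAt.comp_hasDerivAt t (hline t))
  have hdiff : Differentiable ℂ h := fun t => (hder t).differentiableAt
  have h0 : deriv h 0 = fderiv ℂ f w v := by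
    have := (hder 0).deriv
    simpa using this
  have hcd : Complex.cderiv ρ h 0 = deriv h 0 :=
    Complex.cderiv_eq_deriv isOpen_univ hdiff.differentiableOn hρ (Set.subset_univ _)
  have hb : ∀ t ∈ Metric.sphere (0 : ℂ) ρ, ‖h t‖ ≤ M := by
    intro t ht
    have ht' : ‖t‖ = ρ := by simpa using ht
    apply hbd
    have hnorm : ‖w + t • v - w‖ = r := by
      have : ‖t • v‖ = r := by
        rw [norm_smul, ht', hρdef, div_mul_cancel₀ _ hv'.ne']
      simpa using this
    simp only [Metric.mem_closedBall, dist_eq_norm, hnorm, le_refl]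
  have hest := Complex.norm_cderiv_le hρ hb
  rw [hcd, h0] at hest
  calc ‖fderiv ℂ f w v‖ ≤ M / ρ := hest
    _ = M / r * ‖v‖ := by
        rw [hρdef]
        field_simp

/-- A uniform limit on `closure U` of entire functions is holomorphic on the open set `U`
(several complex variables version). -/
lemma differentiableOn_of_tendstoUniformlyOn {E : Type*} [NormedAddCommGroup E]
    [NormedSpace ℂ E] {U : Set E} (hU : IsOpen U) {F : ℕ → E → ℂ} {G : E → ℂ}
    (hF : ∀ k, Differentiable ℂ (F k))
    (hFG : TendstoUniformlyOn F G atTop (closure U)) :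
    DifferentiableOn ℂ G U := by
  intro z hz
  obtain ⟨R, hR, hRU⟩ := Metric.isOpen_iff.mp hU z hz
  set r : ℝ := R / 3 with hr3
  have hr : 0 < r := by positivity
  have hball2 : Metric.closedBall z (2 * r) ⊆ U :=
    (Metric.closedBall_subset_ball (by rw [hr3]; linarith)).trans hRU
  have hcls : Metric.closedBall z (2 * r) ⊆ closure U := hball2.trans subset_closure
  have hcauchy : UniformCauchySeqOn F atTop (Metric.closedBall z (2 * r)) :=
    hFG.uniformCauchySeqOn.mono hcls
  rw [Metric.uniformCauchySeqOn_iff] at hcauchy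
  have hdcauchy : UniformCauchySeqOn (fun k w => fderiv ℂ (F k) w) atTop (Metric.ball z r) := by
    rw [Metric.uniformCauchySeqOn_iff]
    intro ε hε
    obtain ⟨N, hN⟩ := hcauchy (ε * r / 2) (by positivity)
    refine ⟨N, fun m hm k hk x hx => ?_⟩
    have hsub : Metric.closedBall x r ⊆ Metric.closedBall z (2 * r) := by
      intro y hy
      rw [Metric.mem_closedBall] at *
      rw [Metric.mem_ball] at hx
      have := dist_triangle y x z
      linarith
    have hdf : Differentiable ℂ (F m - F k) := (hF m).sub (hF k)
    have hbd : ∀ y ∈ Metric.closedBall x r, ‖(F m - F k) y‖ ≤ ε * r / 2 := by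
      intro y hy
      have := hN m hm k hk y (hsub hy)
      rw [dist_eq_norm] at this
      exact le_of_lt this
    have hest := fderiv_norm_le_of_entire hdf x hr (by positivity) hbd
    have heq : fderiv ℂ (F m - F k) x = fderiv ℂ (F m) x - fderiv ℂ (F k) x :=
      fderiv_sub ((hF m).differentiableAt) ((hF k).differentiableAt)
    rw [dist_eq_norm, ← heq]
    calc ‖fderiv ℂ (F m - F k) x‖ ≤ ε * r / 2 / r := hest
      _ = ε / 2 := by field_simp
      _ < ε := by linarith
  set g' : E → (E →L[ℂ] ℂ) := fun w => limUnder atTop (fun k => fderiv ℂ (F k) w) with hg'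
  have hptws : ∀ x ∈ Metric.ball z r,
      Tendsto (fun k => fderiv ℂ (F k) x) atTop (𝓝 (g' x)) := by
    intro x hx
    have hc : CauchySeq fun k => fderiv ℂ (F k) x := by
      rw [Metric.cauchySeq_iff]
      intro ε hε
      rw [Metric.uniformCauchySeqOn_iff] at hdcauchy
      obtain ⟨N, hN⟩ := hdcauchy ε hε
      exact ⟨N, fun m hm k hk => hN m hm k hk x hx⟩
    exact hc.tendsto_limUnder
  have hunif : TendstoUniformlyOn (fun k w => fderiv ℂ (F k) w) g' atTop (Metric.ball z r) :=
    hdcauchy.tendstoUniformlyOn_of_tendsto hptws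
  have hmain := hasFDerivAt_of_tendstoUniformlyOn Metric.isOpen_ball hunif
    (fun k x _hx => ((hF k).differentiableAt).hasFDerivAt)
    (fun x hx => hFG.tendsto_at (subset_closure (hRU (Metric.ball_subset_ball (by linarith) hx))))
    (Metric.mem_ball_self hr)
  exact hmain.differentiableAt.differentiableWithinAt

/-- Every element of the polynomial algebra on `S` is the restriction of an entire function. -/
lemma exists_entire_of_mem_adjoin {n : ℕ} (S : Set (Fin n → ℂ)) (f : C(S, ℂ))
    (hf : f ∈ Algebra.adjoin ℂ (Set.range (coordFn S))) :
    ∃ F : (Fin n → ℂ) → ℂ, Differentiable ℂ F ∧ ∀ x : S, f x = F x := by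
  let T : Subalgebra ℂ C(S, ℂ) :=
    { carrier := {f | ∃ F : (Fin n → ℂ) → ℂ, Differentiable ℂ F ∧ ∀ x : S, f x = F x}
      mul_mem' := by
        rintro a b ⟨F, hF, ha⟩ ⟨G, hG, hb⟩
        exact ⟨fun z => F z * G z, hF.mul hG, fun x => by
          simp [ContinuousMap.mul_apply, ha x, hb x]⟩
      add_mem' := by
        rintro a b ⟨F, hF, ha⟩ ⟨G, hG, hb⟩
        exact ⟨fun z => F z + G z, hF.add hG, fun x => by
          simp [ContinuousMap.add_apply, ha x, hb x]⟩
      algebraMap_mem' := by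
        intro c
        exact ⟨fun _ => c, differentiable_const c, fun x => by
          simp [Algebra.algebraMap_eq_smul_one]⟩ }
  have hle : Algebra.adjoin ℂ (Set.range (coordFn S)) ≤ T := by
    apply Algebra.adjoin_le
    rintro g ⟨i, rfl⟩
    exact ⟨fun z => z i, (ContinuousLinearMap.proj i : (Fin n → ℂ) →L[ℂ] ℂ).differentiable,
      fun x => rfl⟩
  exact hle hf

/-- Let `K ⊆ ℂⁿ` be compact with nonempty interior.  If `z₀ ∈ ∂(K°)` is a peak
point for `P(cl(K°))`, then `z₀` is a peak point for `A(K)`: there is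
`g ∈ A(K)` with `g(z₀) = 1` and `|g(z)| < 1` for all `z ∈ K`, `z ≠ z₀`. -/
theorem noncoherent_stmt10 (n : ℕ) (K : Set (Fin n → ℂ)) (hK : IsCompact K)
    (hint : (interior K).Nonempty)
    (z₀ : Fin n → ℂ) (hz₀fr : z₀ ∈ frontier (interior K))
    (hz₀cl : z₀ ∈ closure (interior K)) (hz₀K : z₀ ∈ K)
    (p : C(closure (interior K), ℂ)) (hp : p ∈ polyClosure (closure (interior K)))
    (hp1 : p ⟨z₀, hz₀cl⟩ = 1)
    (hppk : ∀ z : ↥(closure (interior K)), (z : Fin n → ℂ) ≠ z₀ →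
      ‖p z‖ < 1) :
    ∃ g ∈ diskAlgebraOf K, g ⟨z₀, hz₀K⟩ = 1 ∧
      ∀ z : ↥K, (z : Fin n → ℂ) ≠ z₀ → ‖g z‖ < 1 := by
  have hKclosed : IsClosed K := hK.isClosed
  have hSsubK : closure (interior K) ⊆ K := closure_minimal interior_subset hKclosed
  have hScompact : IsCompact (closure (interior K)) :=
    hK.of_isClosed_subset isClosed_closure hSsubK
  haveI : CompactSpace (closure (interior K)) := isCompact_iff_compactSpace.mp hScompact
  haveI : CompactSpace K := isCompact_iff_compactSpace.mp hK
  have hSne : (closure (interior K)).Nonempty := ⟨z₀, hz₀cl⟩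
  -- obtain an approximating sequence of entire functions
  have hp' : p ∈ closure ((Algebra.adjoin ℂ (Set.range (coordFn (closure (interior K)))) :
      Subalgebra ℂ C(closure (interior K), ℂ)) : Set C(closure (interior K), ℂ)) := hp
  obtain ⟨q, hqA, hq⟩ := mem_closure_iff_seq_limit.mp hp'
  choose F hFdiff hFeq using fun k => exists_entire_of_mem_adjoin _ (q k) (hqA k)
  have hq_unif : TendstoUniformly (fun k (x : closure (interior K)) => q k x) (⇑p) atTop :=
    ContinuousMap.tendsto_iff_tendstoUniformly.mp hq
  have hGU : TendstoUniformlyOn F (extendByZero p) atTop (closure (interior K)) := by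
    rw [Metric.tendstoUniformlyOn_iff]
    rw [Metric.tendstoUniformly_iff] at hq_unif
    intro ε hε
    filter_upwards [hq_unif ε hε] with k hk
    intro x hx
    have h1 := hk ⟨x, hx⟩
    have e1 : extendByZero p x = p ⟨x, hx⟩ := dif_pos hx
    have e2 : F k x = q k ⟨x, hx⟩ := (hFeq k ⟨x, hx⟩).symm
    rw [e1, e2]
    exact h1
  have hpdiff : DifferentiableOn ℂ (extendByZero p) (interior K) :=
    differentiableOn_of_tendstoUniformlyOn isOpen_interior hFdiff hGU
  -- bounds on (1 + p)/2
  have habs_lt : ∀ y : closure (interior K), (y : Fin n → ℂ) ≠ z₀ →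
      ‖(1 + p y) / 2‖ < 1 := by
    intro y hy
    have hy1 := hppk y hy
    have h1 : ‖1 + p y‖ ≤ 1 + ‖p y‖ := by
      calc ‖1 + p y‖ ≤ ‖(1 : ℂ)‖ + ‖p y‖ :=
            norm_add_le _ _
        _ = 1 + ‖p y‖ := by rw [norm_one]
    rw [norm_div, Complex.norm_two]
    linarith
  have habs_le : ∀ y : closure (interior K), ‖(1 + p y) / 2‖ ≤ 1 := by
    intro y
    by_cases hy : (y : Fin n → ℂ) = z₀
    · have hyy : y = ⟨z₀, hz₀cl⟩ := Subtype.ext hy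
      rw [hyy, hp1]
      norm_num
    · exact (habs_lt y hy).le
  -- Tietze extension of (1 + p)/2 from cl(K°) (as a subset of K) to all of K
  set S' : Set (↥K) := (Subtype.val : ↥K → (Fin n → ℂ)) ⁻¹' closure (interior K) with hS'
  have hS'closed : IsClosed S' := isClosed_closure.preimage continuous_subtype_val
  have hcont0 : Continuous fun x : S' => p ⟨((x : ↥K) : Fin n → ℂ), x.2⟩ :=
    p.continuous.comp
      (Continuous.subtype_mk (continuous_subtype_val.comp continuous_subtype_val) _)
  obtain ⟨H, hH⟩ := ContinuousMap.exists_restrict_eq hS'closed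
    (⟨fun x : S' => (1 + p ⟨((x : ↥K) : Fin n → ℂ), x.2⟩) / 2,
      (continuous_const.add hcont0).div_const 2⟩ : C(S', ℂ))
  have hHeq : ∀ (x : ↥K) (hx : (x : Fin n → ℂ) ∈ closure (interior K)),
      H x = (1 + p ⟨(x : Fin n → ℂ), hx⟩) / 2 := by
    intro x hx
    have := DFunLike.congr_fun hH (⟨x, hx⟩ : S')
    simpa [ContinuousMap.restrict_apply] using this
  -- retraction of ℂ onto the closed unit disc
  set ret : ℂ → ℂ := fun w => (max 1 ‖w‖)⁻¹ • w with hretdef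
  have hmaxpos : ∀ w : ℂ, (0 : ℝ) < max 1 ‖w‖ := fun w =>
    lt_of_lt_of_le one_pos (le_max_left _ _)
  have hret_cont : Continuous ret :=
    ((continuous_const.max continuous_norm).inv₀
      fun w => (hmaxpos w).ne').smul continuous_id
  have hret_le : ∀ w, ‖ret w‖ ≤ 1 := by
    intro w
    rw [hretdef]
    simp only
    rw [norm_smul, norm_inv, Real.norm_eq_abs,
      abs_of_pos (hmaxpos w)]
    rw [inv_mul_le_iff₀ (hmaxpos w), mul_one]
    exact le_max_right _ _
  have hret_eq : ∀ w, ‖w‖ ≤ 1 → ret w = w := by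
    intro w hw
    rw [hretdef]
    simp only
    rw [max_eq_left hw, inv_one, one_smul]
  -- the damping factor ψ
  have hψpos : ∀ x : ↥K,
      (0 : ℝ) < 1 + Metric.infDist (x : Fin n → ℂ) (closure (interior K)) := by
    intro x
    have := Metric.infDist_nonneg (x := (x : Fin n → ℂ)) (s := closure (interior K))
    linarith
  have hψcont : Continuous fun x : ↥K =>
      (1 + Metric.infDist (x : Fin n → ℂ) (closure (interior K)))⁻¹ :=
    (continuous_const.add
      ((Metric.continuous_infDist_pt _).comp continuous_subtype_val)).inv₀
      fun x => (hψpos x).ne'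
  -- the peak function
  set g : C(↥K, ℂ) := ⟨fun x =>
      ((1 + Metric.infDist (x : Fin n → ℂ) (closure (interior K)))⁻¹ : ℝ) • ret (H x),
    hψcont.smul (hret_cont.comp H.continuous)⟩ with hgdef
  have hgS : ∀ (x : ↥K) (hx : (x : Fin n → ℂ) ∈ closure (interior K)),
      g x = (1 + p ⟨(x : Fin n → ℂ), hx⟩) / 2 := by
    intro x hx
    show ((1 + Metric.infDist (x : Fin n → ℂ) (closure (interior K)))⁻¹ : ℝ) • ret (H x) = _
    rw [Metric.infDist_zero_of_mem hx]
    simp only [add_zero, inv_one, one_smul]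
    rw [hHeq x hx]
    exact hret_eq _ (habs_le ⟨_, hx⟩)
  refine ⟨g, ?_, ?_, ?_⟩
  · -- membership in A(K)
    show DifferentiableOn ℂ (extendByZero g) (interior K)
    have hd : DifferentiableOn ℂ (fun z => (1 + extendByZero p z) * (2 : ℂ)⁻¹) (interior K) :=
      (hpdiff.const_add 1).mul_const ((2 : ℂ)⁻¹)
    apply hd.congr
    intro z hz
    have hzK : z ∈ K := interior_subset hz
    have hzS : z ∈ closure (interior K) := subset_closure hz
    have e1 : extendByZero g z = g ⟨z, hzK⟩ := dif_pos hzK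
    rw [e1, hgS ⟨z, hzK⟩ hzS, div_eq_mul_inv]
    simp [extendByZero, hzS]
  · -- value 1 at z₀
    rw [hgS ⟨z₀, hz₀K⟩ hz₀cl,
      show p ⟨((⟨z₀, hz₀K⟩ : ↥K) : Fin n → ℂ), hz₀cl⟩ = 1 from hp1]
    norm_num
  · -- strict peak property
    intro z hz
    by_cases hzS : (z : Fin n → ℂ) ∈ closure (interior K)
    · rw [hgS z hzS]
      exact habs_lt ⟨_, hzS⟩ hz
    · have hd : 0 < Metric.infDist (z : Fin n → ℂ) (closure (interior K)) :=
        (isClosed_closure.notMem_iff_infDist_pos hSne).mp hzS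
      have h1 : ‖g z‖ =
          (1 + Metric.infDist (z : Fin n → ℂ) (closure (interior K)))⁻¹ *
            ‖ret (H z)‖ := by
        rw [hgdef]
        simp only [ContinuousMap.coe_mk]
        rw [norm_smul, Real.norm_eq_abs,
          abs_of_pos (inv_pos.mpr (hψpos z))]
      rw [h1]
      have h2 : (1 + Metric.infDist (z : Fin n → ℂ) (closure (interior K)))⁻¹ < 1 := by
        apply inv_lt_one_of_one_lt₀
        linarith
      calc (1 + Metric.infDist (z : Fin n → ℂ) (closure (interior K)))⁻¹ *
            ‖ret (H z)‖
          ≤ (1 + Metric.infDist (z : Fin n → ℂ) (closure (interior K)))⁻¹ * 1 :=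
            mul_le_mul_of_nonneg_left (hret_le _) (inv_pos.mpr (hψpos z)).le
        _ < 1 := by rw [mul_one]; exact h2
end

section
/- For a compact set K ⊆ ℂⁿ, the algebra C(K,ℂ) of all continuous complex-valued functions on K is coherent if and only if K is finite. Moreover, if K is finite, then every ideal of C(K,ℂ) is principal. -/
open Metric Set Filter Topology


lemma seq_construct {n : ℕ} {K : Set (Fin n → ℂ)} (hK : IsCompact K) (hinf : K.Infinite) :
    ∃ (p : Fin n → ℂ) (x : ℕ → (Fin n → ℂ)), p ∈ K ∧ (∀ k, x k ∈ K) ∧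
      (∀ k, 0 < dist (x k) p) ∧ (∀ k, dist (x (k+1)) p < dist (x k) p / 4) := by
  obtain ⟨p, hpK, hacc⟩ := hinf.exists_accPt_of_subset_isCompact hK subset_rfl
  have hstep : ∀ δ : ℝ, 0 < δ → ∃ y, y ∈ K ∧ 0 < dist y p ∧ dist y p < δ := by
    intro δ hδ
    have := accPt_iff_nhds.mp hacc (ball p δ) (ball_mem_nhds p hδ)
    obtain ⟨y, ⟨hyb, hyK⟩, hyne⟩ := this
    exact ⟨y, hyK, dist_pos.mpr hyne, mem_ball.mp hyb⟩
  obtain ⟨y0, hy0⟩ := hstep 1 one_pos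
  have hnext : ∀ z : {y : Fin n → ℂ // y ∈ K ∧ 0 < dist y p},
      ∃ w : {y : Fin n → ℂ // y ∈ K ∧ 0 < dist y p}, dist w.1 p < dist z.1 p / 4 := by
    intro z
    obtain ⟨y, h1, h2, h3⟩ := hstep (dist z.1 p / 4) (by have := z.2.2; positivity)
    exact ⟨⟨y, h1, h2⟩, h3⟩
  choose f hf using hnext
  set z0 : {y : Fin n → ℂ // y ∈ K ∧ 0 < dist y p} := ⟨y0, hy0.1, hy0.2.1⟩
  refine ⟨p, fun k => (f^[k] z0).1, hpK, fun k => (f^[k] z0).2.1, fun k => (f^[k] z0).2.2, ?_⟩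
  intro k
  show dist (↑(f^[k+1] z0)) p < _
  rw [Function.iterate_succ_apply']
  exact hf _
lemma infDist_ball_eq {n : ℕ} (x : ℕ → Fin n → ℂ) (R : ℕ → ℝ)
    (hR : ∀ k, 0 < R k) (hdisj : ∀ j k, j ≠ k → R j + R k < dist (x j) (x k))
    (u : Fin n → ℂ) (hu : ‖u‖ = 1)
    (𝒦 : Set ℕ) {k : ℕ} (hk : k ∈ 𝒦) {y : Fin n → ℂ} (hy : dist y (x k) < R k) :
    infDist y (⋃ m ∈ 𝒦, ball (x m) (R m))ᶜ = R k - dist y (x k) := by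
  set S := (⋃ m ∈ 𝒦, ball (x m) (R m))ᶜ with hS
  have hmemS : ∀ z, z ∈ S ↔ ∀ m ∈ 𝒦, R m ≤ dist z (x m) := by
    intro z
    simp [hS, mem_compl_iff, mem_iUnion, not_lt, dist_comm]
  set D := dist y (x k) with hD
  have hD0 : 0 ≤ D := dist_nonneg
  -- the unit direction
  set w : Fin n → ℂ := if y = x k then u else (dist y (x k))⁻¹ • (y - x k) with hw
  have hwn : ‖w‖ = 1 := by
    rw [hw]
    split_ifs with h
    · exact hu
    · have hyx : y - x k ≠ 0 := sub_ne_zero.mpr h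
      have hDpos : 0 < dist y (x k) := dist_pos.mpr h
      rw [norm_smul, Real.norm_eq_abs, abs_of_pos (inv_pos.mpr hDpos), dist_eq_norm,
        inv_mul_cancel₀ (by rw [← dist_eq_norm]; exact hDpos.ne')]
  set z : Fin n → ℂ := x k + R k • w with hzdef
  have hzxk : dist z (x k) = R k := by
    rw [hzdef, dist_eq_norm, add_sub_cancel_left, norm_smul, hwn, Real.norm_eq_abs,
      abs_of_pos (hR k), mul_one]
  have hzS : z ∈ S := by
    rw [hmemS]
    intro m hm
    rcases eq_or_ne m k with rfl | hne
    · exact hzxk.ge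
    · refine le_of_lt ?_
      calc R m ≤ (R m + R k) - R k := by ring_nf; exact le_refl _
          _ < dist (x m) (x k) - dist z (x k) := by
            rw [hzxk]
            exact sub_lt_sub_right (hdisj m k hne) _
          _ ≤ dist z (x m) := by
            have := dist_triangle (x m) z (x k)
            rw [dist_comm z (x m)]
            linarith [dist_triangle (x m) z (x k)]
  have hyz : dist y z = R k - D := by
    by_cases h : y = x k
    · subst h
      rw [hD, dist_self, sub_zero, dist_comm]
      exact hzxk
    · have hDpos : 0 < D := dist_pos.mpr h
      have hzy : z - y = (R k * D⁻¹ - 1) • (y - x k) := by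
        rw [hzdef, hw, if_neg h, smul_smul, ← hD, sub_smul, one_smul]
        abel
      rw [dist_comm, dist_eq_norm, hzy, norm_smul, Real.norm_eq_abs]
      have hnorm : ‖y - x k‖ = D := by rw [hD, dist_eq_norm]
      have h1 : (1:ℝ) ≤ R k * D⁻¹ := by
        rw [← div_eq_mul_inv, le_div_iff₀ hDpos, one_mul]
        exact hy.le
      rw [abs_of_nonneg (by linarith), hnorm, sub_mul, one_mul, mul_assoc,
        inv_mul_cancel₀ hDpos.ne', mul_one]
  refine le_antisymm ?_ ?_
  · calc infDist y S ≤ dist y z := infDist_le_dist_of_mem hzS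
      _ = R k - D := hyz
  · by_contra hcon
    push_neg at hcon
    obtain ⟨z', hz'S, hz'lt⟩ := (infDist_lt_iff ⟨z, hzS⟩).mp hcon
    have : R k ≤ dist z' (x k) := (hmemS z').mp hz'S k hk
    have := dist_triangle z' y (x k)
    rw [dist_comm z' y] at this
    linarith

lemma infinite_not_fg {n : ℕ} {K : Set (Fin n → ℂ)} (hK : IsCompact K) (hinf : K.Infinite) :
    ∃ I J : Ideal C(K, ℂ), I.FG ∧ J.FG ∧ ¬ (I ⊓ J).FG := by
  classical
  haveI : CompactSpace K := isCompact_iff_compactSpace.mp hK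
  obtain ⟨p, x, hpK, hxK, hx0, hx4⟩ := seq_construct hK hinf
  set r : ℕ → ℝ := fun k => dist (x k) p with hr
  set R : ℕ → ℝ := fun k => r k / 10 with hRdef
  have hrpos : ∀ k, 0 < r k := hx0
  have hRpos : ∀ k, 0 < R k := fun k => by have := hrpos k; positivity
  have hRr : ∀ k, R k < r k := fun k => by have := hrpos k; rw [hRdef]; linarith
  have hrlt : ∀ j k, j < k → r k < r j / 4 := by
    intro j k hjk
    induction k with
    | zero => omega
    | succ k ih =>
      rcases Nat.lt_succ_iff_lt_or_eq.mp hjk with h | rfl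
      · have h1 := ih h
        have h2 := hx4 k
        have := hrpos k
        simp only [hr] at *
        linarith
      · exact hx4 j
  have hdisj : ∀ j k, j ≠ k → R j + R k < dist (x j) (x k) := by
    have aux : ∀ j k, j < k → R j + R k < dist (x j) (x k) := by
      intro j k hjk
      have h1 := hrlt j k hjk
      have h2 := hrpos j
      have h3 := hrpos k
      have htri : dist (x j) p ≤ dist (x j) (x k) + dist (x k) p := dist_triangle _ _ _
      simp only [hr, hRdef] at *
      linarith
    intro j k hjk
    rcases lt_or_gt_of_ne hjk with h | h
    · exact aux j k h
    · rw [dist_comm]; rw [add_comm]; exact aux k j h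
  have hrbound : ∀ k, r k ≤ r 0 * (1/4)^k := by
    intro k
    induction k with
    | zero => simp
    | succ k ih =>
      have h2 := hx4 k
      have := hrpos k
      simp only [hr] at *
      calc dist (x (k+1)) p ≤ dist (x k) p / 4 := by linarith
        _ ≤ (dist (x 0) p * (1/4)^k) / 4 := by linarith
        _ = dist (x 0) p * (1/4)^(k+1) := by ring
  have hrtend : Tendsto r atTop (𝓝 0) := by
    refine squeeze_zero (fun k => (hrpos k).le) hrbound ?_
    have := (tendsto_pow_atTop_nhds_zero_of_lt_one (by norm_num : (0:ℝ) ≤ 1/4)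
      (by norm_num : (1/4:ℝ) < 1)).const_mul (r 0)
    simpa using this
  -- unit vector
  have hx0p : x 0 - p ≠ 0 := sub_ne_zero.mpr (fun h => (hrpos 0).ne' (by simp [hr, h]))
  set u : Fin n → ℂ := ‖x 0 - p‖⁻¹ • (x 0 - p) with hu_def
  have hu : ‖u‖ = 1 := by
    rw [hu_def, norm_smul, Real.norm_eq_abs, abs_of_pos (inv_pos.mpr (norm_pos_iff.mpr hx0p)),
      inv_mul_cancel₀ (norm_ne_zero_iff.mpr hx0p)]
  -- the two closed sets and distance functions
  set Sd : Set (Fin n → ℂ) := (⋃ m ∈ (univ : Set ℕ), ball (x m) (R m))ᶜ with hSd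
  set Se : Set (Fin n → ℂ) := (⋃ m ∈ {m : ℕ | Odd m}, ball (x m) (R m))ᶜ with hSe
  set xk : ℕ → K := fun k => ⟨x k, hxK k⟩ with hxk
  set pK : K := ⟨p, hpK⟩ with hpK'
  set dR : C(K, ℝ) := ⟨fun y => infDist y.1 Sd,
    (continuous_infDist_pt Sd).comp continuous_subtype_val⟩ with hdR
  set eR : C(K, ℝ) := ⟨fun y => infDist y.1 Se,
    (continuous_infDist_pt Se).comp continuous_subtype_val⟩ with heR
  have hd_ball : ∀ k (y : K), dist y.1 (x k) < R k → dR y = R k - dist y.1 (x k) :=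
    fun k y h => infDist_ball_eq x R hRpos hdisj u hu univ (mem_univ k) h
  have he_ball : ∀ k, Odd k → ∀ y : K, dist y.1 (x k) < R k → eR y = R k - dist y.1 (x k) :=
    fun k hk y h => infDist_ball_eq x R hRpos hdisj u hu {m : ℕ | Odd m} hk h
  have hd_xk : ∀ k, dR (xk k) = R k := by
    intro k
    have := hd_ball k (xk k) (by simp [hxk, hRpos k])
    simpa [hxk] using this
  have he_xk_odd : ∀ k, Odd k → eR (xk k) = R k := by
    intro k hk
    have := he_ball k hk (xk k) (by simp [hxk, hRpos k])
    simpa [hxk] using this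
  have he_xk_even : ∀ k, Even k → eR (xk k) = 0 := by
    intro k hk
    refine infDist_zero_of_mem ?_
    rw [hSe, mem_compl_iff]
    intro hmem
    obtain ⟨m, hm, hball⟩ := mem_iUnion₂.mp hmem
    have hne : m ≠ k := by
      rintro rfl
      exact (Nat.not_odd_iff_even.mpr hk) hm
    have := hdisj k m (Ne.symm hne)
    have := hRpos k
    rw [mem_ball] at hball
    linarith
  -- complexification
  set cplx : C(K, ℝ) → C(K, ℂ) := fun f => ⟨fun y => (f y : ℂ),
    Complex.continuous_ofReal.comp f.continuous⟩ with hcplx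
  have hcplx_mul : ∀ f g : C(K, ℝ), cplx (f * g) = cplx f * cplx g := by
    intro f g; ext y; simp [hcplx]
  set dC := cplx dR with hdC
  set eC := cplx eR with heC
  refine ⟨Ideal.span {dC}, Ideal.span {eC}, ⟨{dC}, by simp⟩, ⟨{eC}, by simp⟩, ?_⟩
  rintro ⟨T, hT⟩
  -- coefficient functions for elements of T
  have hcoef : ∀ t : C(K, ℂ), t ∈ (T : Set C(K, ℂ)) →
      ∃ q : C(K, ℂ), q * dC = t ∧ ∀ k, Even k → q (xk k) = 0 := by
    intro t ht
    have htIJ : t ∈ Ideal.span {dC} ⊓ Ideal.span {eC} := hT ▸ Ideal.subset_span ht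
    obtain ⟨qt, hq⟩ := Ideal.mem_span_singleton'.mp htIJ.1
    obtain ⟨st, hs⟩ := Ideal.mem_span_singleton'.mp htIJ.2
    refine ⟨qt, hq, fun k hk => ?_⟩
    have h1 : t (xk k) = qt (xk k) * (R k : ℂ) := by
      rw [← hq, ContinuousMap.mul_apply]
      congr 1
      show ((dR (xk k) : ℝ) : ℂ) = (R k : ℂ)
      rw [hd_xk k]
    have h2 : t (xk k) = 0 := by
      rw [← hs, ContinuousMap.mul_apply]
      have : ((eR (xk k) : ℝ) : ℂ) = 0 := by rw [he_xk_even k hk]; simp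
      show st (xk k) * ((eR (xk k) : ℝ) : ℂ) = 0
      rw [this, mul_zero]
    have hRk : (R k : ℂ) ≠ 0 := by
      simp only [ne_eq, Complex.ofReal_eq_zero]
      exact (hRpos k).ne'
    have := h1.symm.trans h2
    exact (mul_eq_zero.mp this).resolve_right hRk
  choose! q hqd hqe using hcoef
  -- convergence of the sequence to p
  have hxk_tend : Tendsto xk atTop (𝓝 pK) := by
    rw [tendsto_iff_dist_tendsto_zero]
    have : ∀ k, dist (xk k) pK = r k := fun k => rfl
    simpa only [this] using hrtend
  have hq0 : ∀ t ∈ (T : Set C(K, ℂ)), q t pK = 0 := by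
    intro t ht
    have h2m : Tendsto (fun m : ℕ => 2 * m) atTop atTop :=
      tendsto_atTop_atTop.mpr (fun b => ⟨b, fun a ha => by omega⟩)
    have heven_tend : Tendsto (fun m => xk (2 * m)) atTop (𝓝 pK) := hxk_tend.comp h2m
    have hqt : Tendsto (fun m => q t (xk (2 * m))) atTop (𝓝 (q t pK)) :=
      ((q t).continuous.tendsto pK).comp heven_tend
    have hconst : (fun m : ℕ => q t (xk (2 * m))) = fun _ => 0 := by
      funext m
      exact hqe t ht (2 * m) (even_two_mul m)
    rw [hconst] at hqt
    exact tendsto_nhds_unique hqt tendsto_const_nhds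
  -- selection of a sparse odd subsequence
  have hsel : ∀ l m : ℕ, ∃ k, m ≤ k ∧ Odd k ∧
      ∀ t ∈ (T : Set C(K, ℂ)), ‖t (xk k)‖ ≤ R k * (1/4)^l := by
    intro l m
    have hev : ∀ᶠ k in atTop, ∀ t ∈ T, ‖q t (xk k)‖ ≤ (1/4)^l := by
      rw [eventually_all_finset]
      intro t ht
      have htend : Tendsto (fun k => ‖q t (xk k)‖) atTop (𝓝 0) := by
        have := (((q t).continuous.tendsto pK).comp hxk_tend).norm
        rw [hq0 t ht, norm_zero] at this
        exact this
      have : ∀ᶠ k in atTop, ‖q t (xk k)‖ < (1/4)^l :=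
        htend.eventually_lt_const (by positivity)
      exact this.mono (fun k hk => hk.le)
    obtain ⟨N, hN⟩ := eventually_atTop.mp hev
    refine ⟨2 * max N m + 1, by omega, ⟨max N m, rfl⟩, ?_⟩
    intro t ht
    have hk : N ≤ 2 * max N m + 1 := by omega
    have hq_bound := hN _ hk t ht
    have ht_eq : t (xk (2 * max N m + 1)) = q t (xk (2 * max N m + 1)) *
        ((R (2 * max N m + 1) : ℝ) : ℂ) := by
      conv_lhs => rw [← hqd t ht]
      rw [ContinuousMap.mul_apply]
      congr 1
      show ((dR _ : ℝ) : ℂ) = _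
      rw [hd_xk]
    rw [ht_eq, norm_mul]
    have : ‖((R (2 * max N m + 1) : ℝ) : ℂ)‖ = R (2 * max N m + 1) := by
      rw [Complex.norm_real, Real.norm_eq_abs, abs_of_pos (hRpos _)]
    rw [this, mul_comm]
    exact mul_le_mul_of_nonneg_left hq_bound (hRpos _).le
  choose sel hsel1 hsel2 hsel3 using hsel
  -- a strictly monotone odd subsequence with good bounds
  have Hj : ∃ j : ℕ → ℕ, (∀ l, Odd (j l)) ∧ StrictMono j ∧
      (∀ l, ∀ t ∈ (T : Set C(K, ℂ)), ‖t (xk (j l))‖ ≤ R (j l) * (1/4)^l) := by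
    refine ⟨fun l => Nat.rec (sel 0 0) (fun l' prev => sel (l'+1) (prev+1)) l, ?_, ?_, ?_⟩
    · intro l
      cases l with
      | zero => exact hsel2 0 0
      | succ l => exact hsel2 (l+1) _
    · refine strictMono_nat_of_lt_succ (fun l => ?_)
      exact lt_of_lt_of_le (Nat.lt_succ_self _) (hsel1 (l+1) _)
    · intro l
      cases l with
      | zero => exact hsel3 0 0
      | succ l => exact hsel3 (l+1) _
  obtain ⟨j, hjodd, hjmono, hjbound⟩ := Hj
  have hjne : ∀ l l', l' ≠ l → j l' ≠ j l := fun l l' hne => fun h => hne (hjmono.injective h)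
  -- bump functions
  set ψ : ℕ → K → ℝ := fun l y => max 0 (1 - (2 / R (j l)) * dist y.1 (x (j l))) with hψ
  have hψcont : ∀ l, Continuous (ψ l) :=
    fun l => continuous_const.max (continuous_const.sub (continuous_const.mul
      (continuous_subtype_val.dist continuous_const)))
  have hψ0 : ∀ l y, 0 ≤ ψ l y := fun l y => le_max_left _ _
  have hψ1 : ∀ l y, ψ l y ≤ 1 := by
    intro l y
    have h1 : 0 ≤ (2 / R (j l)) * dist y.1 (x (j l)) := by
      have := hRpos (j l); positivity
    exact max_le zero_le_one (by linarith)
  have hψne : ∀ l y, ψ l y ≠ 0 → dist y.1 (x (j l)) < R (j l) := by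
    intro l y hne
    have hpos : 0 < 1 - (2 / R (j l)) * dist y.1 (x (j l)) := by
      rcases lt_or_ge 0 (1 - (2 / R (j l)) * dist y.1 (x (j l))) with h | h
      · exact h
      · exact absurd (max_eq_left h) hne
    have hR := hRpos (j l)
    have h2 : 2 / R (j l) * dist (↑y) (x (j l)) < 1 := by linarith
    rw [div_mul_eq_mul_div, div_lt_one hR] at h2
    have hd := dist_nonneg (x := y.1) (y := x (j l))
    linarith
  have hψself : ∀ l, ψ l (xk (j l)) = 1 := by
    intro l
    have : dist (xk l).1 (x (j l)) = dist (x l) (x (j l)) := rfl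
    simp [hψ, hxk]
  have hψother : ∀ l l', l' ≠ l → ψ l' (xk (j l)) = 0 := by
    intro l l' hne
    have hd : R (j l') < dist (x (j l)) (x (j l')) := by
      have := hdisj (j l) (j l') (fun h => hjne l l' hne h.symm)
      have := hRpos (j l)
      linarith
    have hRl' := hRpos (j l')
    rw [hψ]
    refine max_eq_left ?_
    show 1 - (2 / R (j l')) * dist (xk (j l)).1 (x (j l')) ≤ 0
    have hdist : dist (xk (j l)).1 (x (j l')) = dist (x (j l)) (x (j l')) := rfl
    rw [hdist]
    rw [div_mul_eq_mul_div, sub_nonpos, le_div_iff₀ hRl']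
    nlinarith
  -- the function a
  have hsum : Summable (fun l : ℕ => (1/2:ℝ)^l) :=
    summable_geometric_of_lt_one (by norm_num) (by norm_num)
  set a : K → ℝ := fun y => ∑' l, (1/2:ℝ)^l * ψ l y with ha
  have ha_cont : Continuous a := by
    refine continuous_tsum (fun l => continuous_const.mul (hψcont l)) hsum ?_
    intro l y
    rw [Real.norm_eq_abs, abs_of_nonneg (by positivity : (0:ℝ) ≤ (1/2)^l * ψ l y)]
    calc (1/2:ℝ)^l * ψ l y ≤ (1/2)^l * 1 :=
          mul_le_mul_of_nonneg_left (hψ1 l y) (by positivity)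
      _ = (1/2)^l := mul_one _
  have ha_val : ∀ l, a (xk (j l)) = (1/2:ℝ)^l := by
    intro l
    have heq : a (xk (j l)) = ∑' l', (1/2:ℝ)^l' * ψ l' (xk (j l)) := rfl
    rw [heq, tsum_eq_single l (fun l' hl' => by rw [hψother l l' hl', mul_zero])]
    rw [hψself l, mul_one]
  have ha_supp : ∀ y : K, a y ≠ 0 → ∃ l, ψ l y ≠ 0 := by
    intro y hay
    by_contra hcon
    push_neg at hcon
    exact hay (by rw [ha]; simp only [hcon, mul_zero]; exact tsum_zero)
  set aR : C(K, ℝ) := ⟨a, ha_cont⟩ with haR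
  -- d and e agree on the support of a
  have hde_eq : aR * dR = aR * eR := by
    ext y
    rw [ContinuousMap.mul_apply, ContinuousMap.mul_apply]
    by_cases hay : aR y = 0
    · rw [hay, zero_mul, zero_mul]
    · obtain ⟨l, hl⟩ := ha_supp y hay
      have hdist := hψne l y hl
      rw [hd_ball (j l) y hdist, he_ball (j l) (hjodd l) y hdist]
  -- the element h
  set h : C(K, ℂ) := cplx (aR * dR) with hh
  have hhI : h ∈ Ideal.span {dC} := by
    rw [hh, hcplx_mul]
    exact Ideal.mem_span_singleton'.mpr ⟨cplx aR, rfl⟩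
  have hhJ : h ∈ Ideal.span {eC} := by
    rw [hh, hde_eq, hcplx_mul]
    exact Ideal.mem_span_singleton'.mpr ⟨cplx aR, rfl⟩
  have hmem : h ∈ Ideal.span (T : Set C(K, ℂ)) := by
    rw [hT]
    exact Submodule.mem_inf.mpr ⟨hhI, hhJ⟩
  obtain ⟨c, -, hc⟩ := Submodule.mem_span_finset.mp hmem
  set B := ∑ t ∈ T, ‖c t‖ with hB
  obtain ⟨l, hl⟩ := pow_unbounded_of_one_lt B (by norm_num : (1:ℝ) < 2)
  -- evaluate h at xk (j l)
  have hval : h (xk (j l)) = (((1/2:ℝ)^l * R (j l) : ℝ) : ℂ) := by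
    show (((aR * dR) (xk (j l)) : ℝ) : ℂ) = _
    rw [ContinuousMap.mul_apply]
    congr 1
    show a (xk (j l)) * dR (xk (j l)) = _
    rw [ha_val l, hd_xk]
  have hnorm_h : ‖h (xk (j l))‖ = (1/2:ℝ)^l * R (j l) := by
    rw [hval, Complex.norm_real, Real.norm_eq_abs,
      abs_of_pos (by have := hRpos (j l); positivity)]
  have hsum_eval : h (xk (j l)) = ∑ t ∈ T, c t (xk (j l)) * t (xk (j l)) := by
    rw [← hc]
    simp [ContinuousMap.coe_sum, Finset.sum_apply, smul_eq_mul]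
  have hbound : ‖h (xk (j l))‖ ≤ B * (R (j l) * (1/4:ℝ)^l) := by
    rw [hsum_eval]
    calc ‖∑ t ∈ T, c t (xk (j l)) * t (xk (j l))‖
        ≤ ∑ t ∈ T, ‖c t (xk (j l)) * t (xk (j l))‖ := norm_sum_le _ _
      _ ≤ ∑ t ∈ T, ‖c t‖ * (R (j l) * (1/4:ℝ)^l) := by
          refine Finset.sum_le_sum (fun t ht => ?_)
          rw [norm_mul]
          have h1 : ‖c t (xk (j l))‖ ≤ ‖c t‖ := ContinuousMap.norm_coe_le_norm _ _
          have h2 : ‖t (xk (j l))‖ ≤ R (j l) * (1/4:ℝ)^l := hjbound l t ht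
          exact mul_le_mul h1 h2 (norm_nonneg _) (norm_nonneg _)
      _ = B * (R (j l) * (1/4:ℝ)^l) := by rw [hB, Finset.sum_mul]
  -- final contradiction
  have hs : (0:ℝ) < (1/2:ℝ)^l := by positivity
  have hR0 : (0:ℝ) < R (j l) := hRpos (j l)
  have h14 : (1/4:ℝ)^l = (1/2:ℝ)^l * (1/2:ℝ)^l := by
    rw [← mul_pow]; norm_num
  have hkey : (1/2:ℝ)^l * R (j l) ≤ B * (R (j l) * ((1/2:ℝ)^l * (1/2:ℝ)^l)) := by
    rw [← h14, ← hnorm_h]; exact hbound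
  have hkey' : (1/2:ℝ)^l * R (j l) ≤ (B * (1/2:ℝ)^l) * ((1/2:ℝ)^l * R (j l)) := by
    nlinarith [hkey]
  have hBpos : 1 ≤ B * (1/2:ℝ)^l :=
    (le_mul_iff_one_le_left (by positivity)).mp hkey'
  have h2l : (2:ℝ)^l * (1/2:ℝ)^l = 1 := by
    rw [← mul_pow]; norm_num
  nlinarith

lemma finite_principal {X : Type*} [TopologicalSpace X] [Finite X] [DiscreteTopology X]
    (I : Ideal C(X, ℂ)) : ∃ g : C(X, ℂ), I = Ideal.span {g} := by
  classical
  haveI : Fintype X := Fintype.ofFinite X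
  set S : Finset X := Finset.univ.filter (fun z => ∃ f ∈ I, f z ≠ 0) with hS
  set δ : X → C(X, ℂ) := fun z => ⟨fun w => if w = z then 1 else 0,
    continuous_of_discreteTopology⟩ with hδ
  set g : C(X, ℂ) := ∑ z ∈ S, δ z with hg
  have hgval : ∀ w : X, g w = if w ∈ S then 1 else 0 := by
    intro w
    have : g w = ∑ z ∈ S, (δ z) w := by
      rw [hg]; simp [ContinuousMap.coe_sum, Finset.sum_apply]
    rw [this]
    simp only [hδ, ContinuousMap.coe_mk]
    exact Finset.sum_ite_eq S w (fun _ => 1)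
  have hgI : g ∈ I := by
    rw [hg]
    refine Ideal.sum_mem I ?_
    intro z hz
    obtain ⟨f, hfI, hfz⟩ := (Finset.mem_filter.mp hz).2
    have : δ z = ((f z)⁻¹ • δ z) * f := by
      ext w
      by_cases hw : w = z
      · subst hw; simp [hδ, inv_mul_cancel₀ hfz, mul_comm]
      · simp [hδ, hw]
    rw [this]
    exact I.mul_mem_left _ hfI
  refine ⟨g, le_antisymm ?_ ?_⟩
  · intro f hf
    rw [Ideal.mem_span_singleton']
    refine ⟨f, ?_⟩
    ext w
    by_cases hw : w ∈ S
    · simp [hgval w, hw]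
    · have hfw : f w = 0 := by
        by_contra h
        exact hw (Finset.mem_filter.mpr ⟨Finset.mem_univ w, f, hf, h⟩)
      simp [hgval w, hw, hfw]
  · rw [Ideal.span_le, Set.singleton_subset_iff]
    exact hgI

/-- For a compact set `K ⊆ ℂⁿ`, the algebra `C(K,ℂ)` is coherent if and only if
`K` is finite; moreover if `K` is finite then every ideal of `C(K,ℂ)` is
principal. -/
theorem noncoherent_stmt16 (n : ℕ) (K : Set (Fin n → ℂ)) (hK : IsCompact K) :
    ((∀ I J : Ideal C(K, ℂ), I.FG → J.FG → (I ⊓ J).FG) ↔ K.Finite) ∧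
    (K.Finite → ∀ I : Ideal C(K, ℂ), ∃ g : C(K, ℂ), I = Ideal.span {g}) := by
  constructor
  · constructor
    · intro hyp
      by_contra hfin
      have hinf : K.Infinite := hfin
      obtain ⟨I, J, hI, hJ, hIJ⟩ := infinite_not_fg hK hinf
      exact hIJ (hyp I J hI hJ)
    · intro hfin I J _ _
      haveI := hfin.to_subtype
      obtain ⟨g, hg⟩ := finite_principal (I ⊓ J)
      exact ⟨{g}, by rw [hg]; simp⟩
  · intro hfin I
    haveI := hfin.to_subtype
    exact finite_principal I
end
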